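/- arXiv:0812.0198 — 6 statements merged into one kernel-verified Lean document; each statement's English description precedes it below -/
import Mathlib

section
/- Suppose S_0 ⊆ V satisfies H(S') ≥ H(S_0) for all S' ⊆ S_0, and suppose there is a sequence S_0 = A_0, A_1, …, A_m = V of subsets where each A_{t+1} is obtained from A_t by adding a single vertex or by removing an arbitrary nonempty set of vertices. Then there exists a monotone increasing sequence S_0 = B_0 ⊂ B_1 ⊂ ⋯ ⊂ B_r = V (each step adding a single vertex) with max_t H(B_t) ≤ max_t H(A_t), where H is any submodular function on subsets of V. -/
open Finset

variable {V : Type*} [Fintype V] [DecidableEq V]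

set_option linter.unusedSectionVars false

/-- Lax chain steps: each step either stalls or inserts a new element. -/
def MPLax (C : ℕ → Finset V) (r : ℕ) : Prop :=
  ∀ i < r, C (i + 1) = C i ∨ ∃ x ∉ C i, C (i + 1) = insert x (C i)

lemma mplax_mono {C : ℕ → Finset V} {r : ℕ} (h : MPLax C r) :
    ∀ i j, i ≤ j → j ≤ r → C i ⊆ C j := by
  intro i j hij hjr
  obtain ⟨d, rfl⟩ := Nat.exists_eq_add_of_le hij
  clear hij
  induction d with
  | zero => exact subset_rfl
  | succ d ih =>
    have hstep := h (i + d) (by omega)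
    have hsub : C (i + d) ⊆ C (i + d + 1) := by
      rcases hstep with h1 | ⟨x, _, h2⟩
      · rw [h1]
      · rw [h2]; exact subset_insert _ _
    have h3 : C i ⊆ C (i + d) := ih (by omega)
    have h4 : i + (d + 1) = i + d + 1 := by ring
    rw [h4]
    exact h3.trans hsub

lemma mp_union_step (D A B : Finset V)
    (h : B = A ∨ ∃ x ∉ A, B = insert x A) :
    D ∪ B = D ∪ A ∨ ∃ x ∉ D ∪ A, D ∪ B = insert x (D ∪ A) := by
  rcases h with rfl | ⟨x, hx, rfl⟩
  · exact Or.inl rfl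
  · by_cases hxD : x ∈ D
    · left
      rw [union_insert, insert_eq_self]
      exact mem_union_left _ hxD
    · right
      exact ⟨x, by simp [hxD, hx], by rw [union_insert]⟩

/-- Core exchange lemma: if `G` is weakly closed under union/intersection,
`G X`, `x ∉ X`, and some `Y ⊆ insert x X` admits a `G`-lax chain to `univ`,
then some `Z ⊆ X` admits a `G`-lax chain to `univ`. -/
lemma mp_core (G : Finset V → Prop)
    (hP : ∀ S T, G S → G T → G (S ∪ T) ∨ G (S ∩ T))
    {X : Finset V} {x : V} (hGX : G X) (hx : x ∉ X)
    {Y : Finset V} (hYX : Y ⊆ insert x X)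
    {r : ℕ} {C : ℕ → Finset V} (hC0 : C 0 = Y) (hCr : C r = univ)
    (hlax : MPLax C r) (hG : ∀ i ≤ r, G (C i)) :
    ∃ Z, Z ⊆ X ∧ ∃ (r' : ℕ) (C' : ℕ → Finset V), C' 0 = Z ∧ C' r' = univ ∧ MPLax C' r' ∧
      ∀ i ≤ r', G (C' i) := by
  classical
  by_cases hxY : x ∈ Y
  · by_cases hall : ∀ i ≤ r, G (X ∪ C i)
    · -- X itself has a chain
      have hXY : X ∪ Y = insert x X := by
        apply Subset.antisymm
        · exact union_subset (subset_insert _ _) hYX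
        · exact insert_subset (mem_union_right _ hxY) subset_union_left
      refine ⟨X, subset_rfl, r + 1,
        (fun i => match i with | 0 => X | (j+1) => X ∪ C j),
        rfl, ?_, ?_, ?_⟩
      · show X ∪ C r = univ
        rw [hCr, union_eq_right]
        exact subset_univ _
      · intro i hi
        match i with
        | 0 =>
          right
          exact ⟨x, hx, by show X ∪ C 0 = insert x X; rw [hC0, hXY]⟩
        | (j+1) =>
          exact mp_union_step X (C j) (C (j+1)) (hlax j (by omega))
      · intro i hi
        match i with
        | 0 => exact hGX
        | (j+1) => exact hall j (by omega)
    · -- there's a bad union index; take the minimal one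
      push_neg at hall
      obtain ⟨ib, hibr, hib⟩ := hall
      have hex : ∃ i, ¬ G (X ∪ C i) := ⟨ib, hib⟩
      set i₀ := Nat.find hex with hi₀def
      have hi₀r : i₀ ≤ r := le_trans (Nat.find_min' hex hib) hibr
      have hi₀bad : ¬ G (X ∪ C i₀) := Nat.find_spec hex
      have hmin : ∀ j, j < i₀ → G (X ∪ C j) := by
        intro j hj
        exact not_not.mp (Nat.find_min hex hj)
      have hGD : G (X ∩ C i₀) := by
        rcases hP X (C i₀) hGX (hG i₀ hi₀r) with h | h
        · exact absurd h hi₀bad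
        · exact h
      set D := X ∩ C i₀ with hD
      have hDX : D ⊆ X := inter_subset_left
      have hDx : x ∉ D := fun h => hx (hDX h)
      have hYD : Y ⊆ insert x D := by
        intro y hy
        rcases mem_insert.mp (hYX hy) with rfl | hyX
        · exact mem_insert_self _ _
        · apply mem_insert_of_mem
          refine mem_inter.mpr ⟨hyX, ?_⟩
          have hsub : C 0 ⊆ C i₀ := mplax_mono hlax 0 i₀ (Nat.zero_le _) hi₀r
          exact hsub (hC0 ▸ hy)
      have hDY : D ∪ Y = insert x D := by
        apply Subset.antisymm
        · exact union_subset (subset_insert _ _) hYD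
        · exact insert_subset (mem_union_right _ hxY) subset_union_left
      have hGDC : ∀ j ≤ r, G (D ∪ C j) := by
        intro j hjr
        by_cases hj : j < i₀
        · have hCsub : C j ⊆ C i₀ := mplax_mono hlax j i₀ (le_of_lt hj) hi₀r
          rcases hP (X ∪ C j) (C i₀) (hmin j hj) (hG i₀ hi₀r) with h | h
          · exfalso
            apply hi₀bad
            have he : (X ∪ C j) ∪ C i₀ = X ∪ C i₀ := by
              rw [union_assoc, union_eq_right.mpr hCsub]
            rwa [he] at h
          · have he : (X ∪ C j) ∩ C i₀ = D ∪ C j := by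
              rw [union_inter_distrib_right, inter_eq_left.mpr hCsub]
            rwa [he] at h
        · have hDCj : D ∪ C j = C j := by
            rw [union_eq_right]
            exact (inter_subset_right).trans
              (mplax_mono hlax i₀ j (by omega) hjr)
          rw [hDCj]
          exact hG j hjr
      refine ⟨D, hDX, r + 1,
        (fun i => match i with | 0 => D | (j+1) => D ∪ C j),
        rfl, ?_, ?_, ?_⟩
      · show D ∪ C r = univ
        rw [hCr, union_eq_right]
        exact subset_univ _
      · intro i hi
        match i with
        | 0 =>
          right
          exact ⟨x, hDx, by show D ∪ C 0 = insert x D; rw [hC0, hDY]⟩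
        | (j+1) =>
          exact mp_union_step D (C j) (C (j+1)) (hlax j (by omega))
      · intro i hi
        match i with
        | 0 => exact hGD
        | (j+1) => exact hGDC j (by omega)
  · -- x ∉ Y : Y ⊆ X, reuse the chain
    refine ⟨Y, ?_, r, C, hC0, hCr, hlax, hG⟩
    intro y hy
    rcases mem_insert.mp (hYX hy) with rfl | h
    · exact absurd hy hxY
    · exact h

/-- Dedup a lax chain (unioned with `S0`) into a strictly increasing chain. -/
lemma mp_dedup (S0 : Finset V) :
    ∀ (r : ℕ) (C : ℕ → Finset V), MPLax C r → C r = univ →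
    ∃ (r' : ℕ) (B : ℕ → Finset V), B 0 = S0 ∪ C 0 ∧ B r' = univ ∧
      (∀ s < r', ∃ x ∉ B s, B (s + 1) = insert x (B s)) ∧
      (∀ s ≤ r', ∃ i ≤ r, B s = S0 ∪ C i) := by
  intro r
  induction r with
  | zero =>
    intro C _ hCr
    refine ⟨0, fun _ => S0 ∪ C 0, rfl, ?_, ?_, ?_⟩
    · rw [hCr, union_eq_right]; exact subset_univ _
    · intro s hs; omega
    · intro s hs; exact ⟨0, le_rfl, rfl⟩
  | succ r ih =>
    intro C hlax hCr
    obtain ⟨r', B, hB0, hBr, hBstep, hBdom⟩ :=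
      ih (fun i => C (i + 1)) (fun i hi => hlax (i + 1) (by omega)) hCr
    by_cases hEq : S0 ∪ C 1 = S0 ∪ C 0
    · refine ⟨r', B, by rw [hB0, hEq], hBr, hBstep, ?_⟩
      intro s hs
      obtain ⟨i, hi, he⟩ := hBdom s hs
      exact ⟨i + 1, by omega, he⟩
    · rcases hlax 0 (by omega) with h | ⟨x, hxC, h⟩
      · exact absurd (by rw [h]) hEq
      · have hxS : x ∉ S0 ∪ C 0 := by
          intro hmem
          apply hEq
          rw [h, union_insert, insert_eq_self.mpr hmem]
        refine ⟨r' + 1,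
          (fun s => match s with | 0 => S0 ∪ C 0 | (j+1) => B j),
          rfl, ?_, ?_, ?_⟩
        · show B r' = univ
          exact hBr
        · intro s hs
          match s with
          | 0 =>
            refine ⟨x, hxS, ?_⟩
            show B 0 = insert x (S0 ∪ C 0)
            rw [hB0, h, union_insert]
          | (j+1) =>
            obtain ⟨x', hx', he'⟩ := hBstep j (by omega)
            exact ⟨x', hx', he'⟩
        · intro s hs
          match s with
          | 0 => exact ⟨0, by omega, rfl⟩
          | (j+1) =>
            obtain ⟨i, hi, he⟩ := hBdom j (by omega)
            exact ⟨i + 1, by omega, he⟩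

/-- If `S₀` minimizes a submodular `H` among its own subsets, and there is a path from
`S₀` to `V` in which each step adds a single vertex or removes a nonempty set of
vertices, then there is a monotone increasing path from `S₀` to `V` (adding one vertex
at a time) whose maximal `H`-value is no larger. -/
theorem monotone_path_of_submodular (H : Finset V → ℝ)
    (hsub : ∀ A B : Finset V, H (A ∪ B) + H (A ∩ B) ≤ H A + H B)
    (S0 : Finset V) (hS0 : ∀ S' ⊆ S0, H S0 ≤ H S')
    (m : ℕ) (A : ℕ → Finset V) (hA0 : A 0 = S0) (hAm : A m = Finset.univ)
    (hstep : ∀ t < m, (∃ x ∉ A t, A (t + 1) = insert x (A t)) ∨ A (t + 1) ⊂ A t) :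
    ∃ (r : ℕ) (B : ℕ → Finset V), B 0 = S0 ∧ B r = Finset.univ ∧
      (∀ t < r, ∃ x ∉ B t, B (t + 1) = insert x (B t)) ∧
      (∀ s ≤ r, ∃ t ≤ m, H (B s) ≤ H (A t)) := by
  classical
  -- maximizer over the path
  obtain ⟨tstar, htstar, hmax⟩ :
      ∃ t ∈ Finset.range (m + 1), ∀ s ∈ Finset.range (m + 1), H (A s) ≤ H (A t) :=
    Finset.exists_max_image (Finset.range (m + 1)) (fun t => H (A t))
      ⟨0, Finset.mem_range.mpr (by omega)⟩
  have htm : tstar ≤ m := by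
    have := Finset.mem_range.mp htstar; omega
  have hmax' : ∀ s ≤ m, H (A s) ≤ H (A tstar) := fun s hs =>
    hmax s (Finset.mem_range.mpr (by omega))
  -- the sublevel family
  set G : Finset V → Prop := fun S => H (S0 ∪ S) ≤ H (A tstar) with hGdef
  -- absorption
  have habs : ∀ Z : Finset V, H (S0 ∪ Z) ≤ H Z := by
    intro Z
    have h1 := hsub S0 Z
    have h2 := hS0 (S0 ∩ Z) inter_subset_left
    linarith
  have hGA : ∀ t ≤ m, G (A t) := by
    intro t ht
    exact le_trans (habs (A t)) (hmax' t ht)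
  -- weak closure
  have hP : ∀ S T, G S → G T → G (S ∪ T) ∨ G (S ∩ T) := by
    intro S T hS hT
    have hu : (S0 ∪ S) ∪ (S0 ∪ T) = S0 ∪ (S ∪ T) := by
      ext y; simp only [mem_union]; tauto
    have hi : (S0 ∪ S) ∩ (S0 ∪ T) = S0 ∪ (S ∩ T) := by
      ext y; simp only [mem_union, mem_inter]; tauto
    have hst := hsub (S0 ∪ S) (S0 ∪ T)
    rw [hu, hi] at hst
    simp only [hGdef] at hS hT ⊢
    by_contra hc
    push_neg at hc
    obtain ⟨h1, h2⟩ := hc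
    linarith
  have hGuniv : G Finset.univ := by
    have he : S0 ∪ Finset.univ = Finset.univ := by
      rw [union_eq_right]; exact subset_univ _
    show H (S0 ∪ Finset.univ) ≤ H (A tstar)
    rw [he, ← hAm]
    exact hmax' m le_rfl
  -- downward induction along the path
  have key : ∀ k, k ≤ m → ∃ Y, Y ⊆ A (m - k) ∧
      ∃ r C, C 0 = Y ∧ C r = Finset.univ ∧ MPLax C r ∧ ∀ i ≤ r, G (C i) := by
    intro k
    induction k with
    | zero =>
      intro _
      refine ⟨Finset.univ, ?_, 0, fun _ => Finset.univ, rfl, rfl, ?_, ?_⟩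
      · rw [Nat.sub_zero, hAm]
      · intro i hi; omega
      · intro i _; exact hGuniv
    | succ k ih =>
      intro hk1
      obtain ⟨Y, hYsub, r, C, hC0, hCr, hlax, hG⟩ := ih (by omega)
      set t := m - (k + 1) with htdef
      have ht1 : m - k = t + 1 := by omega
      have htm2 : t < m := by omega
      rw [ht1] at hYsub
      rcases hstep t htm2 with ⟨x, hx, heq⟩ | hss
      · have hYX : Y ⊆ insert x (A t) := by rw [heq] at hYsub; exact hYsub
        obtain ⟨Z, hZ, r', C', hC0', hCr', hlax', hG'⟩ :=
          mp_core G hP (hGA t (le_of_lt htm2)) hx hYX hC0 hCr hlax hG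
        exact ⟨Z, hZ, r', C', hC0', hCr', hlax', hG'⟩
      · exact ⟨Y, hYsub.trans hss.subset, r, C, hC0, hCr, hlax, hG⟩
  obtain ⟨Y, hYS0, r, C, hC0, hCr, hlax, hG⟩ := key m le_rfl
  rw [Nat.sub_self, hA0] at hYS0
  -- dedup into a strict chain
  obtain ⟨r', B, hB0, hBr, hBstep, hBdom⟩ := mp_dedup S0 r C hlax hCr
  refine ⟨r', B, ?_, hBr, hBstep, ?_⟩
  · rw [hB0, hC0, union_eq_left.mpr hYS0]
  · intro s hs
    obtain ⟨i, hi, he⟩ := hBdom s hs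
    refine ⟨tstar, htm, ?_⟩
    rw [he]
    exact hG i hi
end

section
/- In the setting of the restricted kernel P_A of a reversible chain, for any starting state x ∉ A and any t ≥ 0, √(μ(x))·P_x(T_A > t) ≤ (1−λ_0)^t, where 1−λ_0 is the largest eigenvalue of P_A. -/
/-!
Conjugating by `D = diag √μ` turns the reversible kernel `P_A` into a symmetric matrix
`M = D P_A D⁻¹` with nonnegative entries and the same eigenvalues. The Rayleigh quotient of `M` is
at most its top eigenvalue `1 - λ₀`, and nonnegativity gives `|⟪x, M x⟫| ≤ ⟪|x|, M |x|⟫`, so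
`‖M‖ ≤ 1 - λ₀`. Then `√μ(x) (P_A^t f)(x) = (M^t (D f))(x) ≤ ‖M‖^t ‖D f‖` with `‖D f‖² = μ(S∖A) ≤ 1`.
-/

open Module.End Matrix

section RayleighBounds

variable {𝕜 E : Type*} [RCLike 𝕜] [NormedAddCommGroup E] [InnerProductSpace 𝕜 E]

theorem LinearMap.IsSymmetric.re_inner_apply_self_le [FiniteDimensional 𝕜 E] {T : E →L[𝕜] E}
    (hT : (T : E →ₗ[𝕜] E).IsSymmetric) {r : ℝ}
    (hr : ∀ c : ℝ, HasEigenvalue (T : E →ₗ[𝕜] E) c → c ≤ r) (x : E) :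
    RCLike.re (inner 𝕜 (T x) x) ≤ r * ‖x‖ ^ 2 := by
  rcases eq_or_ne x 0 with rfl | hx
  · simp
  have : Nontrivial E := ⟨⟨x, 0, hx⟩⟩
  have hbdd : BddAbove (Set.range fun y : {y : E // y ≠ 0} ↦ T.rayleighQuotient y) :=
    ⟨‖T‖, by rintro _ ⟨y, rfl⟩; exact (le_abs_self _).trans (T.rayleighQuotient_le_norm y)⟩
  have hx_le : T.rayleighQuotient x ≤ r :=
    (le_ciSup hbdd ⟨x, hx⟩).trans (hr _ hT.hasEigenvalue_iSup_of_finiteDimensional)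
  rwa [ContinuousLinearMap.rayleighQuotient, ContinuousLinearMap.reApplyInnerSelf_apply,
    div_le_iff₀ (by positivity)] at hx_le

theorem LinearMap.IsSymmetric.norm_le_of_abs_re_inner_apply_self_le {T : E →L[𝕜] E}
    (hT : (T : E →ₗ[𝕜] E).IsSymmetric) {r : ℝ} (hr : 0 ≤ r)
    (h : ∀ x, |RCLike.re (inner 𝕜 (T x) x)| ≤ r * ‖x‖ ^ 2) : ‖T‖ ≤ r := by
  rw [T.norm_eq_iSup_rayleighQuotient hT]
  refine ciSup_le fun x ↦ ?_
  rcases eq_or_ne x 0 with rfl | hx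
  · simpa using hr
  rw [ContinuousLinearMap.rayleighQuotient, ContinuousLinearMap.reApplyInnerSelf_apply, abs_div,
    abs_of_nonneg (by positivity : (0 : ℝ) ≤ ‖x‖ ^ 2), div_le_iff₀ (by positivity)]
  exact h x

end RayleighBounds

namespace Matrix

variable {n R : Type*} [Fintype n]

theorem abs_dotProduct_mulVec_le [CommRing R] [LinearOrder R] [IsOrderedRing R]
    {A : Matrix n n R} (hA : ∀ i j, 0 ≤ A i j) (u v : n → R) :
    |u ⬝ᵥ A *ᵥ v| ≤ |u| ⬝ᵥ A *ᵥ |v| := by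
  simp only [dotProduct, mulVec, Pi.abs_apply]
  refine (Finset.abs_sum_le_sum_abs _ _).trans (Finset.sum_le_sum fun i _ ↦ ?_)
  rw [abs_mul]
  refine mul_le_mul_of_nonneg_left ((Finset.abs_sum_le_sum_abs _ _).trans_eq ?_) (abs_nonneg _)
  exact Finset.sum_congr rfl fun j _ ↦ by rw [abs_mul, abs_of_nonneg (hA i j)]

theorem norm_toEuclideanCLM_le_of_nonneg [DecidableEq n] {A : Matrix n n ℝ} (hA : A.IsHermitian)
    (hA_nonneg : ∀ i j, 0 ≤ A i j) {r : ℝ} (hr : 0 ≤ r)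
    (heig : ∀ c : ℝ, (∃ v ≠ 0, A *ᵥ v = c • v) → c ≤ r) :
    ‖toEuclideanCLM (𝕜 := ℝ) A‖ ≤ r := by
  set T := toEuclideanCLM (𝕜 := ℝ) A
  have hT : (T : EuclideanSpace ℝ n →ₗ[ℝ] EuclideanSpace ℝ n).IsSymmetric := by
    rw [coe_toEuclideanCLM_eq_toEuclideanLin]
    exact isSymmetric_toEuclideanLin_iff.mpr hA
  have hTeig :
      ∀ c : ℝ, HasEigenvalue (T : EuclideanSpace ℝ n →ₗ[ℝ] EuclideanSpace ℝ n) c → c ≤ r := by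
    intro c hc
    obtain ⟨v, hv⟩ := hc.exists_hasEigenvector
    refine heig c ⟨v.ofLp, ?_, ?_⟩
    · simpa using hv.2
    · simpa [T] using congrArg WithLp.ofLp hv.apply_eq_smul
  have hquad (x : EuclideanSpace ℝ n) : RCLike.re (inner ℝ (T x) x) = x.ofLp ⬝ᵥ A *ᵥ x.ofLp := by
    rw [RCLike.re_to_real, real_inner_comm, inner_toEuclideanCLM]
  refine hT.norm_le_of_abs_re_inner_apply_self_le hr fun x ↦ ?_
  -- Since `A` is entrywise nonnegative, `|x|` dominates `x` in the quadratic form.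
  set y : EuclideanSpace ℝ n := WithLp.toLp 2 |x.ofLp|
  have hy : ‖y‖ = ‖x‖ := by simp [y, EuclideanSpace.norm_eq]
  calc |RCLike.re (inner ℝ (T x) x)| ≤ y.ofLp ⬝ᵥ A *ᵥ y.ofLp :=
        (hquad x).symm ▸ abs_dotProduct_mulVec_le hA_nonneg _ _
    _ = RCLike.re (inner ℝ (T y) y) := (hquad y).symm
    _ ≤ r * ‖x‖ ^ 2 := hy ▸ hT.re_inner_apply_self_le hTeig y

theorem exists_mulVec_eq_smul_of_semiconjBy [CommRing R] [DecidableEq n] {S A B : Matrix n n R}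
    (h : SemiconjBy S A B) (hS : IsUnit S) {c : R} {v : n → R} (hv : v ≠ 0)
    (hAv : A *ᵥ v = c • v) : ∃ w ≠ 0, B *ᵥ w = c • w :=
  ⟨S *ᵥ v, ((mulVec_injective_of_isUnit hS).ne_iff' (mulVec_zero S)).mpr hv, by
    rw [mulVec_mulVec, ← h.eq, ← mulVec_mulVec, hAv, mulVec_smul]⟩

section DiagonalConjugation

variable [Field R] [DecidableEq n] {s : n → R}

theorem semiconjBy_diagonal (hs : ∀ i, s i ≠ 0) (P : Matrix n n R) :
    SemiconjBy (diagonal s) P (diagonal s * P * diagonal s⁻¹) := by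
  rw [SemiconjBy, Matrix.mul_assoc _ (diagonal s⁻¹), diagonal_mul_diagonal]
  simp [inv_mul_cancel₀ (hs _)]

theorem semiconjBy_diagonal_inv (hs : ∀ i, s i ≠ 0) (P : Matrix n n R) :
    SemiconjBy (diagonal s⁻¹) (diagonal s * P * diagonal s⁻¹) P := by
  rw [SemiconjBy, ← Matrix.mul_assoc, ← Matrix.mul_assoc, diagonal_mul_diagonal]
  simp [inv_mul_cancel₀ (hs _)]

theorem isSymm_diagonal_mul_mul_diagonal_inv (hs : ∀ i, s i ≠ 0) {P : Matrix n n R}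
    (hP : ∀ i j, s i ^ 2 * P i j = s j ^ 2 * P j i) : (diagonal s * P * diagonal s⁻¹).IsSymm := by
  refine IsSymm.ext fun i j ↦ ?_
  simp only [diagonal_mul, mul_diagonal, Pi.inv_apply]
  field_simp [hs i, hs j]
  linear_combination (-1 : R) * hP i j

end DiagonalConjugation

theorem sqrt_mul_pow_mulVec_le [DecidableEq n] {μ : n → ℝ} (hμ : ∀ i, 0 < μ i)
    {P : Matrix n n ℝ} (hP_nonneg : ∀ i j, 0 ≤ P i j)
    (hP_rev : ∀ i j, μ i * P i j = μ j * P j i) {r : ℝ} (hr : 0 ≤ r)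
    (heig : ∀ c : ℝ, (∃ v ≠ 0, P *ᵥ v = c • v) → c ≤ r) (v : n → ℝ) (t : ℕ) (i : n) :
    √(μ i) * (P ^ t *ᵥ v) i ≤ r ^ t * ‖WithLp.toLp 2 (fun j ↦ √(μ j) * v j)‖ := by
  set s : n → ℝ := fun j ↦ √(μ j)
  have hs : ∀ j, 0 < s j := fun j ↦ Real.sqrt_pos.mpr (hμ j)
  have hs_ne : ∀ j, s j ≠ 0 := fun j ↦ (hs j).ne'
  set M := diagonal s * P * diagonal s⁻¹
  have hM_herm : M.IsHermitian := isHermitian_iff_isSymm.mpr <|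
    isSymm_diagonal_mul_mul_diagonal_inv hs_ne fun a b ↦ by
      simp only [s, Real.sq_sqrt (hμ _).le, hP_rev]
  have hM_nonneg : ∀ a b, 0 ≤ M a b := fun a b ↦ by
    have := hs a; have := hs b; have := hP_nonneg a b
    simp only [M, diagonal_mul, mul_diagonal, Pi.inv_apply]
    positivity
  have hM_norm : ‖toEuclideanCLM (𝕜 := ℝ) M‖ ≤ r :=
    norm_toEuclideanCLM_le_of_nonneg hM_herm hM_nonneg hr fun c ⟨w, hw, hMw⟩ ↦
      heig c <| exists_mulVec_eq_smul_of_semiconjBy (semiconjBy_diagonal_inv hs_ne P)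
        (isUnit_diagonal.mpr (Pi.isUnit_iff.mpr fun j ↦ (inv_ne_zero (hs_ne j)).isUnit)) hw hMw
  have hsv : diagonal s *ᵥ v = fun j ↦ s j * v j := funext (mulVec_diagonal s v)
  have hconj : s i * (P ^ t *ᵥ v) i = (M ^ t *ᵥ fun j ↦ s j * v j) i := by
    rw [← hsv, mulVec_mulVec, ← ((semiconjBy_diagonal hs_ne P).pow_right t).eq, ← mulVec_mulVec,
      mulVec_diagonal]
  have : Nonempty n := ⟨i⟩
  set g : EuclideanSpace ℝ n := WithLp.toLp 2 (fun j ↦ s j * v j)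
  calc s i * (P ^ t *ᵥ v) i = (toEuclideanCLM (𝕜 := ℝ) (M ^ t) g).ofLp i := hconj
    _ ≤ ‖toEuclideanCLM (𝕜 := ℝ) (M ^ t) g‖ :=
      (Real.le_norm_self _).trans (PiLp.norm_apply_le _ i)
    _ ≤ ‖toEuclideanCLM (𝕜 := ℝ) M‖ ^ t * ‖g‖ := by
      rw [map_pow]
      exact (ContinuousLinearMap.le_opNorm _ _).trans (by gcongr; exact norm_pow_le _ _)
    _ ≤ r ^ t * ‖g‖ := by gcongr

end Matrix

theorem sqrt_mu_hitting_tail_le_general {St : Type*} [Fintype St] [DecidableEq St]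
    (p : St → St → ℝ) (μ : St → ℝ)
    (hμ : ∀ x, 0 < μ x) (hμsum : ∑ x, μ x = 1)
    (hp : ∀ x y, 0 ≤ p x y)
    (hrev : ∀ x y, μ x * p x y = μ y * p y x)
    (A : Finset St)
    (PA : Matrix St St ℝ)
    (hPA : ∀ x y, PA x y = if x ∈ A ∨ y ∈ A then 0 else p x y)
    (lam0 : ℝ) (hlam_le : lam0 ≤ 1)
    (hmaxeig : ∀ c : ℝ, (∃ ψ : St → ℝ, ψ ≠ 0 ∧ PA.mulVec ψ = c • ψ) → c ≤ 1 - lam0)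
    (f : St → ℝ) (hf : ∀ x, f x = if x ∈ A then 0 else 1)
    (x : St) (t : ℕ) :
    Real.sqrt (μ x) * (PA ^ t).mulVec f x ≤ (1 - lam0) ^ t := by
  have hPA_nonneg : ∀ a b, 0 ≤ PA a b := fun a b ↦ by
    rw [hPA]; split_ifs; exacts [le_rfl, hp a b]
  have hPA_rev : ∀ a b, μ a * PA a b = μ b * PA b a := fun a b ↦ by
    simp only [hPA, or_comm (a := a ∈ A)]; split_ifs <;> simp [hrev]
  have hf_norm : ‖WithLp.toLp 2 (fun y ↦ √(μ y) * f y)‖ ≤ 1 := by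
    refine (sq_le_one_iff₀ (norm_nonneg _)).mp ?_
    rw [EuclideanSpace.real_norm_sq_eq, ← hμsum]
    refine Finset.sum_le_sum fun y _ ↦ ?_
    simp only [mul_pow, Real.sq_sqrt (hμ y).le, hf]
    split_ifs <;> simp [(hμ y).le]
  calc √(μ x) * (PA ^ t *ᵥ f) x
      ≤ (1 - lam0) ^ t * ‖WithLp.toLp 2 (fun y ↦ √(μ y) * f y)‖ :=
        sqrt_mul_pow_mulVec_le hμ hPA_nonneg hPA_rev (by linarith) hmaxeig f t x
    _ ≤ (1 - lam0) ^ t := mul_le_of_le_one_right (pow_nonneg (by linarith) t) hf_norm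

/-- For the restricted kernel `P_A` of a reversible chain, with `f` the indicator of
`S∖A` (so that `P_x(T_A > t) = (P_A^t f)(x)`), one has
`√(μ(x))·P_x(T_A > t) ≤ (1−λ₀)^t` for every `x ∉ A`, where `1−λ₀` is the largest
eigenvalue of `P_A`. -/
theorem sqrt_mu_hitting_tail_le {St : Type*} [Fintype St] [DecidableEq St]
    (p : St → St → ℝ) (μ : St → ℝ)
    (hμ : ∀ x, 0 < μ x) (hμsum : ∑ x, μ x = 1)
    (hp : ∀ x y, 0 ≤ p x y) (hrow : ∀ x, ∑ y, p x y = 1)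
    (hrev : ∀ x y, μ x * p x y = μ y * p y x)
    (A : Finset St) (hA : A.Nonempty)
    (PA : Matrix St St ℝ)
    (hPA : ∀ x y, PA x y = if x ∈ A ∨ y ∈ A then 0 else p x y)
    (lam0 : ℝ) (hlam_pos : 0 < lam0) (hlam_le : lam0 ≤ 1)
    (heig : ∃ ψ : St → ℝ, ψ ≠ 0 ∧ PA.mulVec ψ = (1 - lam0) • ψ)
    (hmaxeig : ∀ c : ℝ, (∃ ψ : St → ℝ, ψ ≠ 0 ∧ PA.mulVec ψ = c • ψ) → c ≤ 1 - lam0)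
    (f : St → ℝ) (hf : ∀ x, f x = if x ∈ A then 0 else 1)
    (x : St) (hx : x ∉ A) (t : ℕ) :
    Real.sqrt (μ x) * (PA ^ t).mulVec f x ≤ (1 - lam0) ^ t :=
  sqrt_mu_hitting_tail_le_general p μ hμ hμsum hp hrev A PA hPA lam0 hlam_le hmaxeig f hf x t
end

section
/- Let P_A be the restriction of a reversible kernel to S∖A, with nonnegative top eigenvector ψ_0 (eigenvalue 1−λ_0). Then there exists b ≥ 0 such that, with B = {x : ψ_0(x) > b}, one has (1/|S|)·Q(B) ≤ λ_0 ≤ Q(B), where Q(B) = (∑_{(x,y): x∈B, y∉B} μ(x)p(x,y)) / (∑_{x∈B} μ(x)). -/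
open Finset

/-!
Summing the eigenvalue equation `∑ y, p x y * (ψ₀ x - ψ₀ y) = λ₀ * ψ₀ x` over a super-level set
`B` with weights `μ`, reversibility cancels the pairs inside `B` and leaves
`λ₀ * ∑_{x ∈ B} μ x ψ₀ x = ∑_{x ∈ B, y ∉ B} μ x p x y (ψ₀ x - ψ₀ y)`.
The values of `ψ₀`, together with `0`, leave at most `|S|` gaps between consecutive values, so
one of them is at least `max ψ₀ / |S|`; cutting there bounds the right side below by
`(max ψ₀ / |S|) * Q(B) μ(B)` and the left side above by `λ₀ * max ψ₀ * μ(B)`.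
The upper bound is the variational principle tested on the indicator of `B`, whose Dirichlet
form is the flow out of `B`.
-/

theorem exists_lt_div_le_sub_succ (f : ℕ → ℝ) {n : ℕ} (hn : n ≠ 0) :
    ∃ i < n, (f n - f 0) / n ≤ f (i + 1) - f i := by
  have hsum : ∑ _i ∈ range n, (f n - f 0) / n ≤ ∑ i ∈ range n, (f (i + 1) - f i) := by
    rw [sum_range_sub, sum_const, card_range, nsmul_eq_mul,
      mul_div_cancel₀ _ (Nat.cast_ne_zero.mpr hn)]
  obtain ⟨i, hi, h⟩ := exists_le_of_sum_le (nonempty_range_iff.mpr hn) hsum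
  exact ⟨i, mem_range.mp hi, h⟩

theorem Finset.exists_gap_of_min'_lt_max' (s : Finset ℝ) (hs : s.Nonempty)
    (hlt : s.min' hs < s.max' hs) :
    ∃ c ∈ s, c < s.max' hs ∧
      ∀ v ∈ s, c < v → c + (s.max' hs - s.min' hs) / (#s - 1 : ℕ) ≤ v := by
  have hcard : 1 < #s := one_lt_card.mpr ⟨_, s.min'_mem hs, _, s.max'_mem hs, hlt.ne⟩
  obtain ⟨n, hn⟩ : ∃ n, #s = n + 1 := ⟨#s - 1, by omega⟩
  let e := s.orderEmbOfFin hn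
  let f : ℕ → ℝ := fun i => e ⟨min i n, by omega⟩
  have hf : ∀ i (hi : i ≤ n), f i = e ⟨i, by omega⟩ := fun i hi => by
    simp only [f, min_eq_left hi]
  have hf0 : f 0 = s.min' hs := (hf 0 (Nat.zero_le n)).trans (orderEmbOfFin_zero hn (by omega))
  have hfn : f n = s.max' hs := (hf n le_rfl).trans (orderEmbOfFin_last hn (by omega))
  obtain ⟨i, hi, hgap⟩ := exists_lt_div_le_sub_succ f (n := n) (by omega)
  rw [hf0, hfn, hf i hi.le, hf (i + 1) hi] at hgap
  rw [hn, Nat.add_sub_cancel]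
  have hrange := range_orderEmbOfFin s hn
  refine ⟨e ⟨i, by omega⟩, hrange.subset ⟨_, rfl⟩, ?_, fun v hv hiv => ?_⟩
  · rw [← hfn, hf n le_rfl]
    exact e.strictMono (Fin.mk_lt_mk.mpr hi)
  · obtain ⟨j, rfl⟩ : v ∈ Set.range e := hrange.symm.subset hv
    have hij : (⟨i + 1, by omega⟩ : Fin (n + 1)) ≤ j := e.lt_iff_lt.mp hiv
    linarith [e.monotone hij]

theorem exists_superlevelSet_gap {St : Type*} [Fintype St] (ψ : St → ℝ)
    (hψ : ∀ x, 0 ≤ ψ x) (hne : ψ ≠ 0) :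
    ∃ c M : ℝ, 0 ≤ c ∧ (∀ x, ψ x ≤ M) ∧ (∃ x, c < ψ x) ∧
      ∀ x y, c < ψ x → ψ y ≤ c → M / Fintype.card St ≤ ψ x - ψ y := by
  set s := insert 0 (univ.image ψ)
  have hs : s.Nonempty := insert_nonempty _ _
  have hs_nonneg : ∀ v ∈ s, 0 ≤ v := by
    simp only [s, mem_insert, mem_image, mem_univ, true_and]
    rintro v (rfl | ⟨x, rfl⟩)
    exacts [le_rfl, hψ x]
  have hψs : ∀ x, ψ x ∈ s := fun x => mem_insert_of_mem (mem_image_of_mem ψ (mem_univ x))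
  have hmin : s.min' hs = 0 :=
    le_antisymm (min'_le _ _ (mem_insert_self _ _)) (le_min' _ _ _ hs_nonneg)
  obtain ⟨x₀, hx₀⟩ := Function.ne_iff.mp hne
  have hM : 0 < s.max' hs := ((hψ x₀).lt_of_ne' hx₀).trans_le (le_max' _ _ (hψs x₀))
  obtain ⟨c, hcs, hcM, hgap⟩ := s.exists_gap_of_min'_lt_max' hs (hmin ▸ hM)
  rw [hmin, sub_zero] at hgap
  have hcard : #s - 1 ≤ Fintype.card St := by
    have : #s ≤ _ := card_insert_le 0 (univ.image ψ)
    have := (card_image_le (s := univ) (f := ψ)).trans_eq card_univ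
    omega
  refine ⟨c, s.max' hs, hs_nonneg c hcs, fun x => le_max' _ _ (hψs x), ?_, fun x y hx hy => ?_⟩
  · obtain ⟨x, -, hx⟩ := mem_image.mp ((mem_insert.mp (s.max'_mem hs)).resolve_left hM.ne')
    exact ⟨x, hx ▸ hcM⟩
  · have hpos : (0 : ℝ) < (#s - 1 : ℕ) := Nat.cast_pos.mpr (by
      have := one_lt_card.mpr ⟨c, hcs, _, s.max'_mem hs, hcM.ne⟩; omega)
    have := div_le_div_of_nonneg_left hM.le hpos (Nat.cast_le.mpr hcard)
    linarith [hgap _ (hψs x) hx]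

def boundaryFlow {St : Type*} [Fintype St] [DecidableEq St] (p : St → St → ℝ) (μ : St → ℝ)
    (B : Finset St) : ℝ :=
  ∑ x ∈ B, ∑ y ∈ Bᶜ, μ x * p x y

section Reversible

variable {St : Type*} {p : St → St → ℝ} {μ : St → ℝ}

theorem sum_sum_mul_sub_eq_zero (hrev : ∀ x y, μ x * p x y = μ y * p y x) (B : Finset St)
    (f : St → ℝ) : ∑ x ∈ B, ∑ y ∈ B, μ x * p x y * (f x - f y) = 0 := by
  have h : ∑ x ∈ B, ∑ y ∈ B, μ x * p x y * (f x - f y) =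
      -∑ x ∈ B, ∑ y ∈ B, μ x * p x y * (f x - f y) := by
    conv_lhs => rw [sum_comm]
    simp only [← sum_neg_distrib]
    refine sum_congr rfl fun x _ => sum_congr rfl fun y _ => ?_
    rw [hrev]
    ring
  linarith

variable [Fintype St] [DecidableEq St]

theorem sum_mul_sum_sub_eq_sum_sum_compl (hrev : ∀ x y, μ x * p x y = μ y * p y x)
    (B : Finset St) (f : St → ℝ) :
    ∑ x ∈ B, μ x * ∑ y, p x y * (f x - f y) = ∑ x ∈ B, ∑ y ∈ Bᶜ, μ x * p x y * (f x - f y) := by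
  have hsplit : ∀ x, μ x * ∑ y, p x y * (f x - f y) =
      ∑ y ∈ B, μ x * p x y * (f x - f y) + ∑ y ∈ Bᶜ, μ x * p x y * (f x - f y) := fun x => by
    simp only [sum_add_sum_compl, mul_sum, mul_assoc]
  rw [sum_congr rfl fun x _ => hsplit x, sum_add_distrib, sum_sum_mul_sub_eq_zero hrev, zero_add]

theorem sum_compl_sum_eq_boundaryFlow (hrev : ∀ x y, μ x * p x y = μ y * p y x)
    (B : Finset St) : ∑ x ∈ Bᶜ, ∑ y ∈ B, μ x * p x y = boundaryFlow p μ B := by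
  rw [sum_comm]
  exact sum_congr rfl fun x _ => sum_congr rfl fun y _ => hrev y x

theorem dirichlet_indicator_eq_boundaryFlow (hrev : ∀ x y, μ x * p x y = μ y * p y x)
    (B : Finset St) :
    (1 / 2) * ∑ x, ∑ y, μ x * p x y *
      ((if x ∈ B then 1 else 0) - (if y ∈ B then 1 else 0)) ^ 2 = boundaryFlow p μ B := by
  have hrow : ∀ x, ∑ y, μ x * p x y * ((if x ∈ B then 1 else 0) - (if y ∈ B then 1 else 0)) ^ 2 =
      if x ∈ B then ∑ y ∈ Bᶜ, μ x * p x y else ∑ y ∈ B, μ x * p x y := by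
    intro x
    split_ifs with hx
    · rw [← univ_inter Bᶜ, ← sum_ite_mem]
      refine sum_congr rfl fun y _ => ?_
      by_cases hy : y ∈ B <;> simp [hy]
    · rw [← univ_inter B, ← sum_ite_mem]
      refine sum_congr rfl fun y _ => ?_
      by_cases hy : y ∈ B <;> simp [hy]
  simp only [hrow, sum_ite, filter_mem_eq_inter, univ_inter, filter_not, ← compl_eq_univ_sdiff,
    sum_compl_sum_eq_boundaryFlow hrev]
  rw [boundaryFlow]
  ring

theorem boundaryFlow_nonneg (hμ : ∀ x, 0 ≤ μ x) (hp : ∀ x y, 0 ≤ p x y) (B : Finset St) :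
    0 ≤ boundaryFlow p μ B :=
  sum_nonneg fun x _ => sum_nonneg fun y _ => mul_nonneg (hμ x) (hp x y)

theorem mul_boundaryFlow_le (hμ : ∀ x, 0 ≤ μ x) (hp : ∀ x y, 0 ≤ p x y) {B : Finset St}
    {f : St → ℝ} {g : ℝ} (hgap : ∀ x ∈ B, ∀ y ∉ B, g ≤ f x - f y) :
    g * boundaryFlow p μ B ≤ ∑ x ∈ B, ∑ y ∈ Bᶜ, μ x * p x y * (f x - f y) := by
  simp only [boundaryFlow, mul_sum]
  refine sum_le_sum fun x hx => sum_le_sum fun y hy => ?_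
  rw [mul_comm]
  exact mul_le_mul_of_nonneg_left (hgap x hx y (mem_compl.mp hy)) (mul_nonneg (hμ x) (hp x y))

theorem lam_mul_sum_eq_sum_sum_compl (hrev : ∀ x y, μ x * p x y = μ y * p y x) {B : Finset St}
    {ψ : St → ℝ} {lam : ℝ} (heq : ∀ x ∈ B, ∑ y, p x y * (ψ x - ψ y) = lam * ψ x) :
    lam * ∑ x ∈ B, μ x * ψ x = ∑ x ∈ B, ∑ y ∈ Bᶜ, μ x * p x y * (ψ x - ψ y) := by
  rw [← sum_mul_sum_sub_eq_sum_sum_compl hrev, mul_sum]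
  exact sum_congr rfl fun x hx => by rw [heq x hx]; ring

theorem one_div_mul_boundaryFlow_div_le (hμ : ∀ x, 0 < μ x) (hp : ∀ x y, 0 ≤ p x y)
    (hrev : ∀ x y, μ x * p x y = μ y * p y x) {B : Finset St} (hB : B.Nonempty)
    {ψ : St → ℝ} {lam M K : ℝ} (hK : 0 < K)
    (heq : ∀ x ∈ B, ∑ y, p x y * (ψ x - ψ y) = lam * ψ x)
    (hpos : ∀ x ∈ B, 0 < ψ x) (hle : ∀ x ∈ B, ψ x ≤ M)
    (hgap : ∀ x ∈ B, ∀ y ∉ B, M / K ≤ ψ x - ψ y) :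
    1 / K * (boundaryFlow p μ B / ∑ x ∈ B, μ x) ≤ lam := by
  have hμ' : ∀ x, 0 ≤ μ x := fun x => (hμ x).le
  have hvol : 0 < ∑ x ∈ B, μ x := sum_pos (fun x _ => hμ x) hB
  have hM : 0 < M := by obtain ⟨x, hx⟩ := hB; exact (hpos x hx).trans_le (hle x hx)
  have hflow : M / K * boundaryFlow p μ B ≤ lam * ∑ x ∈ B, μ x * ψ x :=
    (mul_boundaryFlow_le hμ' hp hgap).trans_eq (lam_mul_sum_eq_sum_sum_compl hrev heq).symm
  have hlam : 0 ≤ lam := nonneg_of_mul_nonneg_left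
    ((mul_nonneg (div_pos hM hK).le (boundaryFlow_nonneg hμ' hp B)).trans hflow)
    (sum_pos (fun x hx => mul_pos (hμ x) (hpos x hx)) hB)
  have hmass : ∑ x ∈ B, μ x * ψ x ≤ M * ∑ x ∈ B, μ x := by
    rw [mul_sum]
    exact sum_le_sum fun x hx =>
      (mul_le_mul_of_nonneg_left (hle x hx) (hμ' x)).trans_eq (mul_comm _ _)
  have hK_flow : boundaryFlow p μ B / K ≤ lam * ∑ x ∈ B, μ x := by
    refine le_of_mul_le_mul_left ?_ hM
    calc M * (boundaryFlow p μ B / K) = M / K * boundaryFlow p μ B := by ring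
      _ ≤ lam * ∑ x ∈ B, μ x * ψ x := hflow
      _ ≤ lam * (M * ∑ x ∈ B, μ x) := mul_le_mul_of_nonneg_left hmass hlam
      _ = M * (lam * ∑ x ∈ B, μ x) := by ring
  rw [one_div_mul_eq_div, div_right_comm, div_le_iff₀ hvol]
  exact hK_flow

theorem le_boundaryFlow_div (hμ : ∀ x, 0 < μ x) (hrev : ∀ x y, μ x * p x y = μ y * p y x)
    {A B : Finset St} (hBA : Disjoint B A) (hB : B.Nonempty) {lam : ℝ}
    (hvar : ∀ φ : St → ℝ, (∀ x ∈ A, φ x = 0) →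
      lam * ∑ x, μ x * φ x ^ 2 ≤ (1 / 2) * ∑ x, ∑ y, μ x * p x y * (φ x - φ y) ^ 2) :
    lam ≤ boundaryFlow p μ B / ∑ x ∈ B, μ x := by
  have h := hvar (fun x => if x ∈ B then 1 else 0)
    fun x hx => if_neg (disjoint_right.mp hBA hx)
  simp only [dirichlet_indicator_eq_boundaryFlow hrev, ite_pow, one_pow, ne_eq,
    OfNat.ofNat_ne_zero, not_false_eq_true, zero_pow, mul_ite, mul_one, mul_zero, sum_ite_mem,
    univ_inter] at h
  rwa [le_div_iff₀ (sum_pos (fun x _ => hμ x) hB)]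

end Reversible

theorem sum_mul_sub_eq_of_mulVec_eq {St : Type*} [Fintype St] [DecidableEq St] {p : St → St → ℝ}
    (hrow : ∀ x, ∑ y, p x y = 1) {A : Finset St} {PA : Matrix St St ℝ}
    (hPA : ∀ x y, PA x y = if x ∈ A ∨ y ∈ A then 0 else p x y) {lam : ℝ} {ψ : St → ℝ}
    (hψA : ∀ x ∈ A, ψ x = 0) (heig : PA.mulVec ψ = (1 - lam) • ψ) {x : St} (hx : x ∉ A) :
    ∑ y, p x y * (ψ x - ψ y) = lam * ψ x := by
  have h : ∑ y, p x y * ψ y = (1 - lam) * ψ x := by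
    rw [← smul_eq_mul, ← Pi.smul_apply, ← heig]
    simp only [Matrix.mulVec, dotProduct]
    refine sum_congr rfl fun y _ => ?_
    by_cases hy : y ∈ A <;> simp [hPA, hx, hy, hψA]
  simp only [mul_sub, sum_sub_distrib, ← sum_mul, hrow, h]
  ring

theorem eigenvector_level_set_bounds_general {St : Type*} [Fintype St] [DecidableEq St]
    (p : St → St → ℝ) (μ : St → ℝ)
    (hμ : ∀ x, 0 < μ x)
    (hp : ∀ x y, 0 ≤ p x y) (hrow : ∀ x, ∑ y, p x y = 1)
    (hrev : ∀ x y, μ x * p x y = μ y * p y x)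
    (A : Finset St)
    (PA : Matrix St St ℝ)
    (hPA : ∀ x y, PA x y = if x ∈ A ∨ y ∈ A then 0 else p x y)
    (lam0 : ℝ) (ψ0 : St → ℝ)
    (hψ0_ne : ψ0 ≠ 0) (hψ0_nonneg : ∀ x, 0 ≤ ψ0 x) (hψ0_A : ∀ x ∈ A, ψ0 x = 0)
    (heig : PA.mulVec ψ0 = (1 - lam0) • ψ0)
    (hvar : ∀ φ : St → ℝ, (∀ x ∈ A, φ x = 0) →
      lam0 * ∑ x, μ x * φ x ^ 2 ≤
        (1 / 2) * ∑ x, ∑ y, μ x * p x y * (φ x - φ y) ^ 2) :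
    ∃ b : ℝ, 0 ≤ b ∧
      (1 / (Fintype.card St : ℝ)) *
        ((∑ x ∈ Finset.univ.filter fun x => b < ψ0 x,
            ∑ y ∈ (Finset.univ.filter fun x => b < ψ0 x)ᶜ, μ x * p x y) /
          ∑ x ∈ Finset.univ.filter fun x => b < ψ0 x, μ x) ≤ lam0 ∧
      lam0 ≤ (∑ x ∈ Finset.univ.filter fun x => b < ψ0 x,
            ∑ y ∈ (Finset.univ.filter fun x => b < ψ0 x)ᶜ, μ x * p x y) /
          ∑ x ∈ Finset.univ.filter fun x => b < ψ0 x, μ x := by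
  obtain ⟨c, M, hc, hle, ⟨x₀, hx₀⟩, hgap⟩ := exists_superlevelSet_gap ψ0 hψ0_nonneg hψ0_ne
  set B := univ.filter fun x => c < ψ0 x
  have hmem : ∀ x, x ∈ B ↔ c < ψ0 x := fun x => by
    simp only [B, mem_filter, mem_univ, true_and]
  have hBA : Disjoint B A := disjoint_left.mpr fun x hxB hxA => by
    have := (hmem x).mp hxB
    linarith [hψ0_A x hxA]
  have hB : B.Nonempty := ⟨x₀, (hmem x₀).mpr hx₀⟩
  have hcard : (0 : ℝ) < Fintype.card St := Nat.cast_pos.mpr (Fintype.card_pos_iff.mpr ⟨x₀⟩)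
  refine ⟨c, hc, ?_, le_boundaryFlow_div hμ hrev hBA hB hvar⟩
  refine one_div_mul_boundaryFlow_div_le hμ hp hrev hB hcard
    (fun x hx => sum_mul_sub_eq_of_mulVec_eq hrow hPA hψ0_A heig (disjoint_left.mp hBA hx))
    (fun x hx => hc.trans_lt ((hmem x).mp hx)) (fun x _ => hle x) fun x hx y hy => ?_
  exact hgap x y ((hmem x).mp hx) (not_lt.mp (mt (hmem y).mpr hy))

/-- Given the nonnegative top eigenvector `ψ₀` (eigenvalue `1−λ₀`) of the restricted
kernel `P_A`, there is a threshold `b ≥ 0` such that the super-level set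
`B = {x : ψ₀(x) > b}` satisfies `(1/|S|)·Q(B) ≤ λ₀ ≤ Q(B)`, where
`Q(B) = (∑_{x∈B, y∉B} μ(x)p(x,y)) / μ(B)`. -/
theorem eigenvector_level_set_bounds {St : Type*} [Fintype St] [DecidableEq St]
    (p : St → St → ℝ) (μ : St → ℝ)
    (hμ : ∀ x, 0 < μ x)
    (hp : ∀ x y, 0 ≤ p x y) (hrow : ∀ x, ∑ y, p x y = 1)
    (hrev : ∀ x y, μ x * p x y = μ y * p y x)
    (A : Finset St) (hA : A.Nonempty)
    (PA : Matrix St St ℝ)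
    (hPA : ∀ x y, PA x y = if x ∈ A ∨ y ∈ A then 0 else p x y)
    (lam0 : ℝ) (ψ0 : St → ℝ)
    (hψ0_ne : ψ0 ≠ 0) (hψ0_nonneg : ∀ x, 0 ≤ ψ0 x) (hψ0_A : ∀ x ∈ A, ψ0 x = 0)
    (heig : PA.mulVec ψ0 = (1 - lam0) • ψ0)
    (hvar : ∀ φ : St → ℝ, (∀ x ∈ A, φ x = 0) →
      lam0 * ∑ x, μ x * φ x ^ 2 ≤
        (1 / 2) * ∑ x, ∑ y, μ x * p x y * (φ x - φ y) ^ 2) :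
    ∃ b : ℝ, 0 ≤ b ∧
      (1 / (Fintype.card St : ℝ)) *
        ((∑ x ∈ Finset.univ.filter fun x => b < ψ0 x,
            ∑ y ∈ (Finset.univ.filter fun x => b < ψ0 x)ᶜ, μ x * p x y) /
          ∑ x ∈ Finset.univ.filter fun x => b < ψ0 x, μ x) ≤ lam0 ∧
      lam0 ≤ (∑ x ∈ Finset.univ.filter fun x => b < ψ0 x,
            ∑ y ∈ (Finset.univ.filter fun x => b < ψ0 x)ᶜ, μ x * p x y) /
          ∑ x ∈ Finset.univ.filter fun x => b < ψ0 x, μ x :=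
  eigenvector_level_set_bounds_general p μ hμ hp hrow hrev A PA hPA lam0 ψ0 hψ0_ne hψ0_nonneg hψ0_A
    heig hvar
end

section
/- (Discrete Cheeger-type inequality with weights.) Let G = (V,E) be a finite graph, w, h : V → ℝ_{>0} vertex weights, Ω_1 ⊆ Ω_0 ⊆ V, and f : V → ℝ with: (1) f_i ≥ |f_j| for all i ∈ Ω_1 and all j ∈ V; (2) f_i = 0 for i ∉ Ω_0; (3) L_1 ≤ |Ω_1|_w ≤ |Ω_0|_w ≤ L_2; (4) ∑_{(i,j)∈E}(f_i−f_j)² ≤ λ·∑_i h_i f_i². Then there exists S ⊆ V with L_1 ≤ |S|_w ≤ L_2 and cut(S, V∖S) ≤ √(4λ·max_i(deg(i)/h_i))·|S|_h. -/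
open Finset

set_option maxHeartbeats 1000000

noncomputable def predv (T : Finset ℝ) (t : ℝ) : ℝ :=
  (insert (0:ℝ) (T.filter (fun s => s < t))).max' (insert_nonempty _ _)

lemma predv_lt {T : Finset ℝ} {t : ℝ} (ht : 0 < t) : predv T t < t := by
  apply Finset.max'_lt_iff _ _ |>.2
  intro y hy
  rcases Finset.mem_insert.1 hy with rfl | hy
  · exact ht
  · exact (Finset.mem_filter.1 hy).2

lemma predv_mem {T : Finset ℝ} (h0 : (0:ℝ) ∈ T) (t : ℝ) : predv T t ∈ T := by
  have h := Finset.max'_mem (insert (0:ℝ) (T.filter (fun s => s < t))) (insert_nonempty _ _)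
  rcases Finset.mem_insert.1 h with h | h
  · rw [predv, h]; exact h0
  · exact Finset.filter_subset _ _ h

lemma predv_nonneg {T : Finset ℝ} (t : ℝ) : 0 ≤ predv T t :=
  Finset.le_max' _ _ (Finset.mem_insert_self _ _)

lemma le_predv {T : Finset ℝ} {s t : ℝ} (hs : s ∈ T) (hst : s < t) : s ≤ predv T t := by
  apply Finset.le_max'
  exact Finset.mem_insert_of_mem (Finset.mem_filter.2 ⟨hs, hst⟩)

lemma telescope (T : Finset ℝ) (h0 : (0:ℝ) ∈ T) :
    ∀ n : ℕ, ∀ x ∈ T, 0 ≤ x → (T.filter (fun t => 0 < t ∧ t ≤ x)).card = n →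
    ∑ t ∈ T.filter (fun t => 0 < t ∧ t ≤ x), (t - predv T t) = x := by
  intro n
  induction n with
  | zero =>
    intro x hx hx0 hcard
    have he : T.filter (fun t => 0 < t ∧ t ≤ x) = ∅ := Finset.card_eq_zero.1 hcard
    have : ¬ (0 < x) := by
      intro hxpos
      have : x ∈ T.filter (fun t => 0 < t ∧ t ≤ x) := Finset.mem_filter.2 ⟨hx, hxpos, le_refl x⟩
      simp [he] at this
    have hx0' : x = 0 := le_antisymm (not_lt.1 this) hx0
    rw [he, Finset.sum_empty, hx0']
  | succ n ih =>
    intro x hx hx0 hcard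
    have hxpos : 0 < x := by
      by_contra hxn
      have he : T.filter (fun t => 0 < t ∧ t ≤ x) = ∅ := by
        apply Finset.filter_eq_empty_iff.2
        intro t _ ⟨h1, h2⟩
        exact hxn (lt_of_lt_of_le h1 h2)
      rw [he] at hcard; simp at hcard
    have hxmem : x ∈ T.filter (fun t => 0 < t ∧ t ≤ x) := Finset.mem_filter.2 ⟨hx, hxpos, le_refl x⟩
    have hsplit : T.filter (fun t => 0 < t ∧ t ≤ x) =
        insert x (T.filter (fun t => 0 < t ∧ t ≤ predv T x)) := by
      ext t
      simp only [Finset.mem_insert, Finset.mem_filter]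
      constructor
      · rintro ⟨htT, htpos, htle⟩
        rcases eq_or_lt_of_le htle with rfl | hlt
        · exact Or.inl rfl
        · exact Or.inr ⟨htT, htpos, le_predv htT hlt⟩
      · rintro (rfl | ⟨htT, htpos, htle⟩)
        · exact ⟨hx, hxpos, le_refl _⟩
        · exact ⟨htT, htpos, le_trans htle (le_of_lt (predv_lt hxpos))⟩
    have hxnot : x ∉ T.filter (fun t => 0 < t ∧ t ≤ predv T x) := by
      intro hmem
      have := (Finset.mem_filter.1 hmem).2.2
      linarith [predv_lt (T := T) hxpos]
    have hcard' : (T.filter (fun t => 0 < t ∧ t ≤ predv T x)).card = n := by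
      have := hcard
      rw [hsplit, Finset.card_insert_of_notMem hxnot] at this
      omega
    rw [hsplit, Finset.sum_insert hxnot,
      ih (predv T x) (predv_mem h0 x) (predv_nonneg x) hcard']
    ring

lemma interval_sum (T : Finset ℝ) (h0 : (0:ℝ) ∈ T) {x y : ℝ} (hx : x ∈ T) (hy : y ∈ T)
    (hx0 : 0 ≤ x) (hy0 : 0 ≤ y) :
    ∑ t ∈ T.filter (fun t => y < t ∧ t ≤ x), (t - predv T t) = max (x - y) 0 := by
  have tele : ∀ z ∈ T, 0 ≤ z → ∑ t ∈ T.filter (fun t => 0 < t ∧ t ≤ z), (t - predv T t) = z :=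
    fun z hz hz0 => telescope T h0 _ z hz hz0 rfl
  rcases le_or_gt x y with hxy | hxy
  · have he : T.filter (fun t => y < t ∧ t ≤ x) = ∅ := by
      apply Finset.filter_eq_empty_iff.2
      rintro t _ ⟨ht1, ht2⟩
      linarith
    rw [he, Finset.sum_empty, max_eq_right (by linarith)]
  · have hsplit := Finset.sum_filter_add_sum_filter_not (T.filter (fun t => 0 < t ∧ t ≤ x))
      (fun t => t ≤ y) (fun t => t - predv T t)
    rw [Finset.filter_filter, Finset.filter_filter] at hsplit
    have e1 : T.filter (fun a => (0 < a ∧ a ≤ x) ∧ a ≤ y) = T.filter (fun t => 0 < t ∧ t ≤ y) := by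
      apply Finset.filter_congr
      intro t _
      constructor
      · rintro ⟨⟨a, _⟩, c⟩; exact ⟨a, c⟩
      · rintro ⟨a, b⟩; exact ⟨⟨a, by linarith⟩, b⟩
    have e2 : T.filter (fun a => (0 < a ∧ a ≤ x) ∧ ¬a ≤ y) = T.filter (fun t => y < t ∧ t ≤ x) := by
      apply Finset.filter_congr
      intro t _
      constructor
      · rintro ⟨⟨_, b⟩, c⟩; exact ⟨not_le.1 c, b⟩
      · rintro ⟨a, b⟩; exact ⟨⟨by linarith, b⟩, not_le.2 a⟩
    rw [e1, e2, tele x hx hx0, tele y hy hy0] at hsplit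
    rw [max_eq_left (by linarith)]
    linarith

variable {V : Type*} [Fintype V] [DecidableEq V]

/-- Number of edges of `G` with exactly one endpoint in `S`. -/
def cut (G : SimpleGraph V) [DecidableRel G.Adj] (S : Finset V) : ℕ :=
  ((S ×ˢ Sᶜ).filter fun p => G.Adj p.1 p.2).card

/-- Weighted discrete Cheeger-type inequality: if `f` is a test function that equals its
maximum modulus on `Ω₁`, vanishes outside `Ω₀`, with `L₁ ≤ |Ω₁|_w ≤ |Ω₀|_w ≤ L₂` and
Dirichlet energy `≤ λ‖f‖_h²`, then there is a set `S` with `L₁ ≤ |S|_w ≤ L₂` and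
`cut(S,V∖S) ≤ √(4λ·max_i deg(i)/h_i)·|S|_h`. -/
theorem weighted_cheeger [Nonempty V] (G : SimpleGraph V) [DecidableRel G.Adj]
    (w h : V → ℝ) (hw : ∀ i, 0 < w i) (hh : ∀ i, 0 < h i)
    (Ω1 Ω0 : Finset V) (hΩ : Ω1 ⊆ Ω0)
    (f : V → ℝ) (hf0 : f ≠ 0)
    (h1 : ∀ i ∈ Ω1, ∀ j : V, |f j| ≤ f i)
    (h2 : ∀ i ∉ Ω0, f i = 0)
    (L1 L2 lam : ℝ) (hlam : 0 ≤ lam)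
    (h3a : L1 ≤ ∑ i ∈ Ω1, w i) (h3b : ∑ i ∈ Ω0, w i ≤ L2)
    (h4 : (1 / 2) * ∑ q ∈ Finset.univ.filter (fun q : V × V => G.Adj q.1 q.2),
            (f q.1 - f q.2) ^ 2 ≤ lam * ∑ i, h i * f i ^ 2) :
    ∃ S : Finset V, L1 ≤ ∑ i ∈ S, w i ∧ ∑ i ∈ S, w i ≤ L2 ∧
      (cut G S : ℝ) ≤ Real.sqrt (4 * lam * Finset.univ.sup' Finset.univ_nonempty
          fun i => (G.degree i : ℝ) / h i) * ∑ i ∈ S, h i := by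
  classical
  obtain ⟨i0, hi0⟩ : ∃ i, f i ≠ 0 := by
    by_contra hc
    push_neg at hc
    exact hf0 (funext hc)
  set g : V → ℝ := fun i => f i ^ 2 with hgdef
  have hg0 : ∀ i, 0 ≤ g i := fun i => sq_nonneg _
  have hgi0 : 0 < g i0 := by
    rw [hgdef]; dsimp only; rw [← sq_abs]; exact pow_pos (abs_pos.2 hi0) 2
  set T : Finset ℝ := insert 0 (Finset.univ.image g) with hT
  have h0T : (0:ℝ) ∈ T := Finset.mem_insert_self _ _
  have hgT : ∀ i, g i ∈ T := fun i =>
    Finset.mem_insert_of_mem (Finset.mem_image_of_mem g (Finset.mem_univ i))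
  set Tp : Finset ℝ := T.filter (fun t => 0 < t) with hTp
  set D : ℝ := Finset.univ.sup' Finset.univ_nonempty (fun i => (G.degree i : ℝ) / h i) with hDdef
  set H : ℝ := ∑ i, h i * g i with hHdef
  set C : ℝ := Real.sqrt (4 * lam * D) with hCdef
  set S : ℝ → Finset V := fun t => Finset.univ.filter (fun i => t ≤ g i) with hSdef
  set Δ : ℝ → ℝ := fun t => t - predv T t with hΔdef
  set P : Finset (V × V) := Finset.univ.filter (fun q : V × V => G.Adj q.1 q.2) with hP
  have tele : ∀ x ∈ T, 0 ≤ x → ∑ t ∈ T.filter (fun t => 0 < t ∧ t ≤ x), Δ t = x :=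
    fun x hx hx0 => telescope T h0T _ x hx hx0 rfl
  -- basic positivity facts
  have hD0 : 0 ≤ D := by
    rw [hDdef]
    exact le_trans (div_nonneg (Nat.cast_nonneg (G.degree i0)) (hh i0).le)
      (Finset.le_sup' (fun i => (G.degree i : ℝ) / h i) (Finset.mem_univ i0))
  have hH0 : 0 < H := by
    apply Finset.sum_pos' (fun i _ => mul_nonneg (hh i).le (hg0 i))
    exact ⟨i0, Finset.mem_univ i0, mul_pos (hh i0) hgi0⟩
  have hC0 : 0 ≤ C := Real.sqrt_nonneg _
  -- Identity A : ∑ Δ t * |S t|_h = H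
  have idA : ∑ t ∈ Tp, Δ t * ∑ i ∈ S t, h i = H := by
    have step1 : ∀ t ∈ Tp, Δ t * ∑ i ∈ S t, h i = ∑ i, if t ≤ g i then Δ t * h i else 0 := by
      intro t _
      rw [hSdef]; dsimp only
      rw [Finset.sum_filter, Finset.mul_sum]
      apply Finset.sum_congr rfl
      intro i _
      split <;> simp
    rw [Finset.sum_congr rfl step1, Finset.sum_comm]
    apply Finset.sum_congr rfl
    intro i _
    rw [← Finset.sum_filter, hTp, Finset.filter_filter, ← Finset.sum_mul,
      tele (g i) (hgT i) (hg0 i)]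
    ring
  -- Identity for the cut as an indicator sum
  have idcut : ∀ t : ℝ, ((cut G (S t) : ℝ)) =
      ∑ q ∈ P, (if g q.2 < t ∧ t ≤ g q.1 then (1:ℝ) else 0) := by
    intro t
    rw [Finset.sum_boole, cut]
    norm_cast
    congr 1
    ext q
    simp only [hP, hSdef, Finset.mem_filter, Finset.mem_product, Finset.mem_compl,
      Finset.mem_univ, true_and, not_le]
    tauto
  -- Identity B : ∑ Δ t * cut(S t) = ∑_{(i,j)∈P} max (g i - g j) 0
  have idB : ∑ t ∈ Tp, Δ t * (cut G (S t) : ℝ) = ∑ q ∈ P, max (g q.1 - g q.2) 0 := by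
    have step1 : ∀ t ∈ Tp, Δ t * (cut G (S t) : ℝ) =
        ∑ q ∈ P, (if g q.2 < t ∧ t ≤ g q.1 then Δ t else 0) := by
      intro t _
      rw [idcut t, Finset.mul_sum]
      apply Finset.sum_congr rfl
      intro q _
      split <;> simp
    rw [Finset.sum_congr rfl step1, Finset.sum_comm]
    apply Finset.sum_congr rfl
    intro q _
    rw [← Finset.sum_filter, hTp, Finset.filter_filter]
    have e1 : T.filter (fun t => 0 < t ∧ (g q.2 < t ∧ t ≤ g q.1)) =
        T.filter (fun t => g q.2 < t ∧ t ≤ g q.1) := by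
      apply Finset.filter_congr
      intro t _
      constructor
      · rintro ⟨_, b⟩; exact b
      · rintro ⟨a, b⟩; exact ⟨lt_of_le_of_lt (hg0 q.2) a, a, b⟩
    rw [e1, interval_sum T h0T (hgT q.1) (hgT q.2) (hg0 q.1) (hg0 q.2)]
  -- Symmetry : ∑ max = (1/2) ∑ |·|
  have idC : ∑ q ∈ P, max (g q.1 - g q.2) 0 = (1/2) * ∑ q ∈ P, |g q.1 - g q.2| := by
    have hsw : ∑ q ∈ P, max (g q.1 - g q.2) 0 = ∑ q ∈ P, max (g q.2 - g q.1) 0 := by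
      apply Finset.sum_equiv (Equiv.prodComm V V)
      · intro q
        simp only [hP, Finset.mem_filter, Finset.mem_univ, true_and, Equiv.prodComm_apply,
          Prod.fst_swap, Prod.snd_swap]
        exact ⟨fun ha => ha.symm, fun ha => ha.symm⟩
      · intro q _
        simp
    have : (∑ q ∈ P, max (g q.1 - g q.2) 0) + (∑ q ∈ P, max (g q.1 - g q.2) 0)
        = ∑ q ∈ P, |g q.1 - g q.2| := by
      nth_rewrite 2 [hsw]
      rw [← Finset.sum_add_distrib]
      apply Finset.sum_congr rfl
      intro q _
      rcases le_total (g q.1) (g q.2) with hle | hle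
      · rw [max_eq_right (by linarith), max_eq_left (by linarith), abs_of_nonpos (by linarith)]
        ring
      · rw [max_eq_left (by linarith), max_eq_right (by linarith), abs_of_nonneg (by linarith)]
        ring
    linarith
  -- Cauchy-Schwarz bound
  have hCS : ∑ q ∈ P, |g q.1 - g q.2| ≤
      Real.sqrt (∑ q ∈ P, (f q.1 - f q.2) ^ 2) * Real.sqrt (∑ q ∈ P, (f q.1 + f q.2) ^ 2) := by
    have e : ∀ q ∈ P, |g q.1 - g q.2| = |f q.1 - f q.2| * |f q.1 + f q.2| := by
      intro q _
      rw [hgdef]; dsimp only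
      rw [← abs_mul]
      congr 1
      ring
    rw [Finset.sum_congr rfl e]
    have := Real.sum_mul_le_sqrt_mul_sqrt P (fun q => |f q.1 - f q.2|) (fun q => |f q.1 + f q.2|)
    simpa [sq_abs] using this
  -- Dirichlet energy bound
  have hE : ∑ q ∈ P, (f q.1 - f q.2) ^ 2 ≤ 2 * (lam * H) := by
    rw [hHdef]
    have := h4
    rw [hP]
    linarith
  -- degree sums
  have degsum1 : ∑ q ∈ P, f q.1 ^ 2 = ∑ i, (G.degree i : ℝ) * f i ^ 2 := by
    rw [hP, Finset.sum_filter, ← Finset.univ_product_univ, Finset.sum_product]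
    apply Finset.sum_congr rfl
    intro i _
    show ∑ j, (if G.Adj i j then f i ^ 2 else 0) = _
    rw [← Finset.sum_filter, Finset.sum_const, nsmul_eq_mul, SimpleGraph.degree,
      SimpleGraph.neighborFinset_eq_filter]
  have degsum2 : ∑ q ∈ P, f q.2 ^ 2 = ∑ i, (G.degree i : ℝ) * f i ^ 2 := by
    rw [← degsum1]
    apply Finset.sum_equiv (Equiv.prodComm V V)
    · intro q
      simp only [hP, Finset.mem_filter, Finset.mem_univ, true_and, Equiv.prodComm_apply,
        Prod.fst_swap, Prod.snd_swap]
      exact ⟨fun ha => ha.symm, fun ha => ha.symm⟩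
    · intro q _
      simp
  have hdegD : ∀ i, (G.degree i : ℝ) * f i ^ 2 ≤ D * (h i * g i) := by
    intro i
    have h1' : (G.degree i : ℝ) / h i ≤ D := by
      rw [hDdef]
      exact Finset.le_sup' (fun i => (G.degree i : ℝ) / h i) (Finset.mem_univ i)
    have h2' : (G.degree i : ℝ) ≤ D * h i := (div_le_iff₀ (hh i)).1 h1'
    have : (G.degree i : ℝ) * f i ^ 2 ≤ (D * h i) * f i ^ 2 :=
      mul_le_mul_of_nonneg_right h2' (sq_nonneg _)
    calc (G.degree i : ℝ) * f i ^ 2 ≤ (D * h i) * f i ^ 2 := this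
      _ = D * (h i * g i) := by rw [hgdef]; ring
  have hF : ∑ q ∈ P, (f q.1 + f q.2) ^ 2 ≤ 4 * (D * H) := by
    have step1 : ∑ q ∈ P, (f q.1 + f q.2) ^ 2 ≤ ∑ q ∈ P, (2 * f q.1 ^ 2 + 2 * f q.2 ^ 2) := by
      apply Finset.sum_le_sum
      intro q _
      nlinarith [sq_nonneg (f q.1 - f q.2)]
    have step2 : ∑ q ∈ P, (2 * f q.1 ^ 2 + 2 * f q.2 ^ 2) = 4 * ∑ i, (G.degree i : ℝ) * f i ^ 2 := by
      rw [Finset.sum_add_distrib, ← Finset.mul_sum, ← Finset.mul_sum, degsum1, degsum2]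
      ring
    have step3 : ∑ i, (G.degree i : ℝ) * f i ^ 2 ≤ D * H := by
      rw [hHdef, Finset.mul_sum]
      exact Finset.sum_le_sum (fun i _ => hdegD i)
    linarith
  -- combine : main bound
  have hmain : ∑ t ∈ Tp, Δ t * (cut G (S t) : ℝ) ≤ C * H := by
    rw [idB, idC]
    have hsq1 : Real.sqrt (∑ q ∈ P, (f q.1 - f q.2) ^ 2) ≤ Real.sqrt (2 * (lam * H)) :=
      Real.sqrt_le_sqrt hE
    have hsq2 : Real.sqrt (∑ q ∈ P, (f q.1 + f q.2) ^ 2) ≤ Real.sqrt (4 * (D * H)) :=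
      Real.sqrt_le_sqrt hF
    have hb : (1/2) * (∑ q ∈ P, |g q.1 - g q.2|) ≤
        (1/2) * (Real.sqrt (2 * (lam * H)) * Real.sqrt (4 * (D * H))) := by
      have := mul_le_mul hsq1 hsq2 (Real.sqrt_nonneg _) (Real.sqrt_nonneg _)
      have hCS' := hCS
      nlinarith [this, hCS']
    refine le_trans hb ?_
    have key : Real.sqrt (2 * (lam * H)) * Real.sqrt (4 * (D * H)) ≤ 2 * (C * H) := by
      rw [← Real.sqrt_mul (by positivity)]
      have hCH : C * H = Real.sqrt (4 * lam * D * H ^ 2) := by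
        have e1 : Real.sqrt (4 * lam * D * H ^ 2)
            = Real.sqrt (4 * lam * D) * Real.sqrt (H ^ 2) := Real.sqrt_mul (by positivity) _
        rw [Real.sqrt_sq hH0.le] at e1
        rw [hCdef, e1]
      have h2' : (2:ℝ) = Real.sqrt 4 := by
        rw [show (4:ℝ) = 2^2 by norm_num, Real.sqrt_sq (by norm_num)]
      rw [hCH]
      nth_rewrite 2 [h2']
      rw [← Real.sqrt_mul (by norm_num)]
      apply Real.sqrt_le_sqrt
      nlinarith [mul_nonneg (mul_nonneg hlam hD0) (sq_nonneg H)]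
    linarith
  -- averaging
  have hTpne : Tp.Nonempty := ⟨g i0, Finset.mem_filter.2 ⟨hgT i0, hgi0⟩⟩
  have hΔpos : ∀ t ∈ Tp, 0 < Δ t := by
    intro t ht
    exact sub_pos.2 (predv_lt (Finset.mem_filter.1 ht).2)
  have hex : ∃ t ∈ Tp, (cut G (S t) : ℝ) ≤ C * ∑ i ∈ S t, h i := by
    by_contra hc
    push_neg at hc
    have hlt : C * H < ∑ t ∈ Tp, Δ t * (cut G (S t) : ℝ) := by
      have e : C * H = ∑ t ∈ Tp, Δ t * (C * ∑ i ∈ S t, h i) := by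
        rw [← idA, Finset.mul_sum]
        apply Finset.sum_congr rfl
        intro t _
        ring
      rw [e]
      exact Finset.sum_lt_sum_of_nonempty hTpne
        (fun t ht => mul_lt_mul_of_pos_left (hc t ht) (hΔpos t ht))
    linarith
  obtain ⟨t, htTp, hcut⟩ := hex
  have htpos : 0 < t := (Finset.mem_filter.1 htTp).2
  have htT : t ∈ T := (Finset.mem_filter.1 htTp).1
  have hΩ1S : Ω1 ⊆ S t := by
    intro i hi
    rw [hSdef]; simp only [Finset.mem_filter, Finset.mem_univ, true_and]
    rcases Finset.mem_insert.1 htT with rfl | hmem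
    · exact absurd htpos (lt_irrefl 0)
    · obtain ⟨a, _, ha⟩ := Finset.mem_image.1 hmem
      rw [← ha, hgdef]
      dsimp only
      rw [← sq_abs (f a)]
      have := h1 i hi a
      have habs := abs_nonneg (f a)
      nlinarith
  have hSΩ0 : S t ⊆ Ω0 := by
    intro i hi
    rw [hSdef] at hi
    simp only [Finset.mem_filter, Finset.mem_univ, true_and] at hi
    by_contra hiΩ
    have := h2 i hiΩ
    rw [hgdef] at hi
    dsimp only at hi
    rw [this] at hi
    simp at hi
    linarith
  refine ⟨S t, ?_, ?_, ?_⟩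
  · calc L1 ≤ ∑ i ∈ Ω1, w i := h3a
      _ ≤ ∑ i ∈ S t, w i :=
        Finset.sum_le_sum_of_subset_of_nonneg hΩ1S (fun i _ _ => (hw i).le)
  · calc ∑ i ∈ S t, w i ≤ ∑ i ∈ Ω0, w i :=
        Finset.sum_le_sum_of_subset_of_nonneg hSΩ0 (fun i _ _ => (hw i).le)
      _ ≤ L2 := h3b
  · exact hcut
end

section
/- (Expander lower bound on tilted cut.) Let F be an induced subgraph of G on vertex set U such that every vertex i ∈ U has at most b neighbors outside U, and the subgraph induced by U is a (δ,λ) vertex-expander: every S ⊆ U with |S| ≤ δ|U| satisfies cut(S, U∖S) ≥ λ|S|. Then, with h^F_i = h_i + deg_{G∖F}(i) ≤ h_max + b, choosing Ω = {S ⊆ U : |S| < ⌊δ|U|⌋} gives Δ(F; h^F) ≥ (λ − h_max − b)·⌊δ|U|⌋, hence Γ_*(G;h) ≥ (λ − h_max − b)·⌊δ|U|⌋. -/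
open Finset

variable {V : Type*} [Fintype V] [DecidableEq V]

/-- Number of edges of `G` inside the induced subgraph on `W` with exactly one endpoint
in `S` (for `S ⊆ W`): `cut(S, W∖S)`. -/
def cutW (G : SimpleGraph V) [DecidableRel G.Adj] (W S : Finset V) : ℕ :=
  ((S ×ˢ (W \ S)).filter fun p => G.Adj p.1 p.2).card

/-- Number of neighbors of `i` outside `W`. -/
def degOut (G : SimpleGraph V) [DecidableRel G.Adj] (W : Finset V) (i : V) : ℕ :=
  (Finset.univ.filter fun j => G.Adj i j ∧ j ∉ W).card

/-- The tilted cut `Δ(F;h')` of the subgraph of `G` induced by `W`. -/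
noncomputable def tiltedCutOn (G : SimpleGraph V) [DecidableRel G.Adj]
    (W : Finset V) (h' : V → ℝ) : ℝ :=
  sSup {d : ℝ | ∃ Ω : Finset (Finset V), (∀ S ∈ Ω, S ⊆ W) ∧ ∅ ∈ Ω ∧ W ∉ Ω ∧
    (∀ S ∈ Ω, ∀ S' ⊆ S, S' ∈ Ω) ∧
    d = sInf {e : ℝ | ∃ S ∈ Ω, ∃ i ∈ W, i ∉ S ∧ insert i S ∉ Ω ∧
      e = max ((cutW G W S : ℝ) - ∑ j ∈ S, h' j)
            ((cutW G W (insert i S) : ℝ) - ∑ j ∈ insert i S, h' j)}}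

/-- `Γ_*(G;h) = max_F Δ(F;h^F)` over induced subgraphs `F` of `G`, where
`h^F_i = h_i + deg_{G∖F}(i)`. -/
noncomputable def GammaStar (G : SimpleGraph V) [DecidableRel G.Adj] (h : V → ℝ) : ℝ :=
  sSup {d : ℝ | ∃ W : Finset V,
    d = tiltedCutOn G W fun i => h i + (degOut G W i : ℝ)}

/-! Take `Ω = {S ⊆ U : |S| < m}` with `m = ⌊δ|U|⌋`. Each boundary pair of `Ω` ends at an
`m`-set `T ⊆ U`, for which expansion gives `cut(T) ≥ λm` while the tilt `h_i + deg_{G∖F}(i)`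
is at most `h_max + b` per vertex. Since `cut(U) = 0`, a positive `λ` keeps `m ≤ |U|`, so `Ω`
is admissible; the case `m = 0` is covered by `Δ ≥ 0`. -/

section Generic

variable {α : Type*} [DecidableEq α]

/-- Extend a largest member of `Ω` contained in `W` by one vertex of `W`. -/
lemma exists_boundary_pair {W : Finset α} {Ω : Finset (Finset α)} (hempty : ∅ ∈ Ω)
    (hW : W ∉ Ω) : ∃ S ∈ Ω, ∃ i ∈ W, i ∉ S ∧ insert i S ∉ Ω := by
  obtain ⟨S, hS, hmax⟩ := (Ω.filter (· ⊆ W)).exists_max_image card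
    ⟨∅, mem_filter.2 ⟨hempty, empty_subset W⟩⟩
  obtain ⟨hSΩ, hSW⟩ := mem_filter.1 hS
  obtain ⟨i, hiW, hiS⟩ := exists_of_ssubset (hSW.ssubset_of_ne fun h => hW (h ▸ hSΩ))
  refine ⟨S, hSΩ, i, hiW, hiS, fun hins => ?_⟩
  have := hmax _ (mem_filter.2 ⟨hins, insert_subset hiW hSW⟩)
  rw [card_insert_of_notMem hiS] at this
  omega

variable (G : SimpleGraph α) [DecidableRel G.Adj]

@[simp]
lemma cutW_self (W : Finset α) : cutW G W W = 0 := by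
  simp [cutW]

def IsVertexExpander (U : Finset α) (δ lam : ℝ) : Prop :=
  ∀ S ⊆ U, (S.card : ℝ) ≤ δ * U.card → lam * S.card ≤ (cutW G U S : ℝ)

variable {G}

/-- `U` itself has empty cut, so a positive expansion rate forbids `δ|U| > |U|`. -/
lemma IsVertexExpander.floor_le_card {U : Finset α} {δ lam : ℝ}
    (hU : IsVertexExpander G U δ lam) (hlam : 0 < lam) : ⌊δ * (U.card : ℝ)⌋₊ ≤ U.card := by
  by_contra! hlt
  have hpos : 0 < ⌊δ * (U.card : ℝ)⌋₊ := (Nat.zero_le _).trans_lt hlt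
  have hle : (U.card : ℝ) ≤ δ * U.card :=
    (Nat.cast_le.2 hlt.le).trans (Nat.floor_le (zero_le_one.trans (Nat.floor_pos.1 hpos)))
  have hcut := hU U subset_rfl hle
  rw [cutW_self, Nat.cast_zero] at hcut
  have hcard : U.card = 0 := by
    exact_mod_cast le_antisymm (nonpos_of_mul_nonpos_right hcut hlam) (Nat.cast_nonneg _)
  simp [hcard] at hlt

end Generic

section TiltedCut

variable (G : SimpleGraph V) [DecidableRel G.Adj]

lemma le_tiltedCutOn {W : Finset V} {h' : V → ℝ} {c : ℝ} (Ω : Finset (Finset V))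
    (hsub : ∀ S ∈ Ω, S ⊆ W) (hempty : ∅ ∈ Ω) (hW : W ∉ Ω)
    (hdown : ∀ S ∈ Ω, ∀ S' ⊆ S, S' ∈ Ω)
    (hc : ∀ S ∈ Ω, ∀ i ∈ W, i ∉ S → insert i S ∉ Ω →
      c ≤ max ((cutW G W S : ℝ) - ∑ j ∈ S, h' j)
        ((cutW G W (insert i S) : ℝ) - ∑ j ∈ insert i S, h' j)) :
    c ≤ tiltedCutOn G W h' := by
  obtain ⟨S, hS, i, hiW, hiS, hins⟩ := exists_boundary_pair hempty hW
  refine le_csSup_of_le ?_ ⟨Ω, hsub, hempty, hW, hdown, rfl⟩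
    (le_csInf ⟨_, S, hS, i, hiW, hiS, hins, rfl⟩ ?_)
  · apply Set.Finite.bddAbove
    apply Set.Finite.subset (Set.finite_range (ι := Finset (Finset V)) _)
    rintro d ⟨Ω, -, -, -, -, rfl⟩
    exact Set.mem_range_self Ω
  rintro e ⟨S, hS, i, hiW, hiS, hins, rfl⟩
  exact hc S hS i hiW hiS hins

/-- For `W = ∅` no family is admissible and `sSup ∅ = 0`; otherwise the family `{∅}` has
value at least `cut(∅) = 0`. -/
lemma tiltedCutOn_nonneg (W : Finset V) (h' : V → ℝ) : 0 ≤ tiltedCutOn G W h' := by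
  rcases W.eq_empty_or_nonempty with rfl | hW
  · exact Real.sSup_nonneg fun _ ⟨_, _, hempty, hnot, _⟩ => absurd hempty hnot
  · refine le_tiltedCutOn G {∅} (by simp) (mem_singleton_self _) ?_ (by simp) ?_
    · simpa [eq_comm] using hW.ne_empty
    · intro S hS _ _ _ _
      rw [mem_singleton.1 hS]
      simp

/-- The downward-closed family `{S ⊆ W : |S| < k}`, whose boundary pairs end at `k`-sets. -/
lemma le_tiltedCutOn_of_forall_card_eq {W : Finset V} {h' : V → ℝ} {c : ℝ} {k : ℕ}
    (hk : 1 ≤ k) (hkW : k ≤ W.card)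
    (hc : ∀ T ⊆ W, T.card = k → c ≤ (cutW G W T : ℝ) - ∑ j ∈ T, h' j) :
    c ≤ tiltedCutOn G W h' := by
  have hmem : ∀ S, S ∈ W.powerset.filter (·.card < k) ↔ S ⊆ W ∧ S.card < k := by simp
  refine le_tiltedCutOn G (W.powerset.filter (·.card < k)) (fun S hS => ((hmem S).1 hS).1)
    ((hmem ∅).2 ⟨empty_subset W, by simpa⟩) (fun hW => by have := ((hmem W).1 hW).2; omega)
    (fun S hS S' hS' => (hmem S').2 ⟨hS'.trans ((hmem S).1 hS).1,
      (card_le_card hS').trans_lt ((hmem S).1 hS).2⟩) ?_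
  intro S hS i hiW hiS hins
  obtain ⟨hSW, hSk⟩ := (hmem S).1 hS
  have hinsW : insert i S ⊆ W := insert_subset hiW hSW
  have hcard : (insert i S).card = k := by
    have := not_lt.1 fun hlt => hins ((hmem _).2 ⟨hinsW, hlt⟩)
    rw [card_insert_of_notMem hiS] at this ⊢
    omega
  exact le_max_of_le_right (hc _ hinsW hcard)

lemma tiltedCutOn_le_GammaStar (h : V → ℝ) (W : Finset V) :
    tiltedCutOn G W (fun i => h i + (degOut G W i : ℝ)) ≤ GammaStar G h := by
  refine le_csSup ?_ ⟨W, rfl⟩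
  apply Set.Finite.bddAbove
  apply Set.Finite.subset (Set.finite_range (ι := Finset V) _)
  rintro d ⟨W, rfl⟩
  exact Set.mem_range_self W

end TiltedCut

theorem expander_tiltedCut_lower_bound_general (G : SimpleGraph V) [DecidableRel G.Adj]
    (h : V → ℝ) (hmax b lam δ : ℝ) (hlam : 0 < lam)
    (hhm : ∀ i, h i ≤ hmax)
    (U : Finset V)
    (hb : ∀ i ∈ U, (degOut G U i : ℝ) ≤ b)
    (hexpand : ∀ S ⊆ U, (S.card : ℝ) ≤ δ * U.card → lam * S.card ≤ (cutW G U S : ℝ)) :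
    (lam - hmax - b) * (⌊δ * (U.card : ℝ)⌋₊ : ℝ) ≤
        tiltedCutOn G U (fun i => h i + (degOut G U i : ℝ)) ∧
    (lam - hmax - b) * (⌊δ * (U.card : ℝ)⌋₊ : ℝ) ≤ GammaStar G h := by
  set m := ⌊δ * (U.card : ℝ)⌋₊
  suffices hΔ : (lam - hmax - b) * (m : ℝ) ≤ tiltedCutOn G U fun i => h i + (degOut G U i : ℝ) from
    ⟨hΔ, hΔ.trans (tiltedCutOn_le_GammaStar G h U)⟩
  rcases Nat.eq_zero_or_pos m with hm | hm
  · simpa [hm] using tiltedCutOn_nonneg G U _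
  refine le_tiltedCutOn_of_forall_card_eq G hm (IsVertexExpander.floor_le_card hexpand hlam) ?_
  intro T hTU hT
  have hcut : lam * m ≤ cutW G U T := by
    have := hexpand T hTU (hT ▸ Nat.floor_le (zero_le_one.trans (Nat.floor_pos.1 hm)))
    rwa [hT] at this
  have hsum : ∑ j ∈ T, (h j + (degOut G U j : ℝ)) ≤ m * (hmax + b) := by
    simpa [hT, mul_add] using
      sum_le_card_nsmul T _ (hmax + b) fun j hj => add_le_add (hhm j) (hb j (hTU hj))
  linarith

/-- Expander lower bound on the tilted cut: if every vertex of `U` has at most `b`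
neighbors outside `U` and the subgraph induced by `U` is a `(δ,λ)` vertex expander,
then `Δ(F;h^F) ≥ (λ − h_max − b)·⌊δ|U|⌋`, hence `Γ_*(G;h) ≥ (λ − h_max − b)·⌊δ|U|⌋`. -/
theorem expander_tiltedCut_lower_bound (G : SimpleGraph V) [DecidableRel G.Adj]
    (h : V → ℝ) (hmax b lam δ : ℝ) (hδ : 0 < δ) (hlam : 0 < lam)
    (hhm : ∀ i, h i ≤ hmax)
    (U : Finset V) (hU : U.Nonempty)
    (hb : ∀ i ∈ U, (degOut G U i : ℝ) ≤ b)
    (hexpand : ∀ S ⊆ U, (S.card : ℝ) ≤ δ * U.card → lam * S.card ≤ (cutW G U S : ℝ)) :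
    (lam - hmax - b) * (⌊δ * (U.card : ℝ)⌋₊ : ℝ) ≤
        tiltedCutOn G U (fun i => h i + (degOut G U i : ℝ)) ∧
    (lam - hmax - b) * (⌊δ * (U.card : ℝ)⌋₊ : ℝ) ≤ GammaStar G h :=
  expander_tiltedCut_lower_bound_general G h hmax b lam δ hlam hhm U hb hexpand
end

section
/- (Key inequality in monotone-path lemma.) With H submodular, S_i = S_0 ∪ {1,…,i}, and T ∪ R ⊆ S_k ∖ S_0 partitioned into R = (S_k∖S_{k+1}) ∩ S_0-relevant and blocks T_1,…,T_r of T where each block T_j satisfies M(T_j, v_{i_j}−1) ≥ 0 at its closing index, and M(R,0) ≥ 0: then M(T ∪ R, k) ≥ ∑_{j=1}^{r−1} M(T_j, v_{i_j}−1) + M(T_r, k) + M(R,0) ≥ 0, where M(A,i) = H(S_i∖A) − H(S_i). -/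
open Finset

variable {V : Type*} [Fintype V] [DecidableEq V]

lemma cut_eq_sum (G : SimpleGraph V) [DecidableRel G.Adj] (S : Finset V) :
    cut G S = ∑ p : V × V, if G.Adj p.1 p.2 ∧ p.1 ∈ S ∧ p.2 ∉ S then 1 else 0 := by
  rw [cut, show (S ×ˢ Sᶜ).filter (fun p => G.Adj p.1 p.2)
      = Finset.univ.filter (fun p : V × V => G.Adj p.1 p.2 ∧ p.1 ∈ S ∧ p.2 ∉ S) by
    ext p; simp [Finset.mem_product]; tauto]
  rw [Finset.card_filter]

lemma cut_submodular (G : SimpleGraph V) [DecidableRel G.Adj] (X Y : Finset V) :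
    cut G (X ∪ Y) + cut G (X ∩ Y) ≤ cut G X + cut G Y := by
  rw [cut_eq_sum, cut_eq_sum, cut_eq_sum, cut_eq_sum,
    ← Finset.sum_add_distrib, ← Finset.sum_add_distrib]
  apply Finset.sum_le_sum
  intro p _
  by_cases hax : p.1 ∈ X <;> by_cases hay : p.1 ∈ Y <;>
    by_cases hbx : p.2 ∈ X <;> by_cases hby : p.2 ∈ Y <;>
    simp [Finset.mem_union, Finset.mem_inter, hax, hay, hbx, hby]

section Hlemmas
variable (H : Finset V → ℝ)

lemma H_submod (G : SimpleGraph V) [DecidableRel G.Adj] (h : V → ℝ)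
    (hH : ∀ S : Finset V, H S = (cut G S : ℝ) - ∑ i ∈ S, h i) (X Y : Finset V) :
    H (X ∪ Y) + H (X ∩ Y) ≤ H X + H Y := by
  have hcut : (cut G (X ∪ Y) : ℝ) + cut G (X ∩ Y) ≤ cut G X + cut G Y := by
    exact_mod_cast cut_submodular G X Y
  have hsum : ∑ i ∈ X ∪ Y, h i + ∑ i ∈ X ∩ Y, h i = ∑ i ∈ X, h i + ∑ i ∈ Y, h i :=
    Finset.sum_union_inter
  rw [hH, hH, hH, hH]; linarith

variable {H}



lemma removal_mono (Hsub : ∀ X Y : Finset V, H (X ∪ Y) + H (X ∩ Y) ≤ H X + H Y) {X Y A : Finset V} (hXY : X ⊆ Y) (hA : A ⊆ X) :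
    H (X \ A) - H X ≤ H (Y \ A) - H Y := by
  have key := Hsub X (Y \ A)
  have h1 : X ∪ (Y \ A) = Y := by
    ext x; simp only [Finset.mem_union, Finset.mem_sdiff]
    constructor
    · rintro (hx | ⟨hx, _⟩); exacts [hXY hx, hx]
    · intro hx; by_cases hxA : x ∈ A
      · exact Or.inl (hA hxA)
      · exact Or.inr ⟨hx, hxA⟩
  have h2 : X ∩ (Y \ A) = X \ A := by
    ext x; simp only [Finset.mem_inter, Finset.mem_sdiff]
    constructor
    · rintro ⟨hx, _, hxA⟩; exact ⟨hx, hxA⟩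
    · rintro ⟨hx, hxA⟩; exact ⟨hx, hXY hx, hxA⟩
  rw [h1, h2] at key; linarith

end Hlemmas

/-- Key superadditivity inequality in the monotone-path lemma.  With the Ising
potential `H(S) = cut(S,V∖S) − |S|_h`, `S_i = S₀ ∪ {v 1,…,v i}`, the marginals
`M(A,i) = H(S_i∖A) − H(S_i)`, the set `T = {v(u 1),…,v(u t)}` partitioned into
consecutive blocks `T_1,…,T_r` (block `j` consisting of the elements with enumeration
indices in `(m_{j−1}, m_j]`), each block nonnegative at its closing index, the last
block nonnegative at `k`, and `M(R,0) ≥ 0` for `R ⊆ S₀`, one has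
`M(T∪R,k) ≥ ∑_{j<r} M(T_j, v_{i_j}−1) + M(T_r,k) + M(R,0) ≥ 0`. -/
theorem block_superadditivity (G : SimpleGraph V) [DecidableRel G.Adj] (h : V → ℝ)
    (H : Finset V → ℝ) (hH : ∀ S : Finset V, H S = (cut G S : ℝ) - ∑ i ∈ S, h i)
    (S0 : Finset V) (k : ℕ) (v : ℕ → V)
    (hv_inj : ∀ a ∈ Finset.Icc 1 k, ∀ b ∈ Finset.Icc 1 k, v a = v b → a = b)
    (hv_S0 : ∀ a ∈ Finset.Icc 1 k, v a ∉ S0)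
    (Sset : ℕ → Finset V) (hSset : ∀ i, Sset i = S0 ∪ (Finset.Icc 1 i).image v)
    (M : Finset V → ℕ → ℝ) (hM : ∀ A i, M A i = H (Sset i \ A) - H (Sset i))
    (t r : ℕ) (hr : 1 ≤ r) (u : ℕ → ℕ)
    (hu_mono : ∀ a, 1 ≤ a → a < t → u a < u (a + 1))
    (hu_range : ∀ a ∈ Finset.Icc 1 t, u a ∈ Finset.Icc 1 k)
    (m : ℕ → ℕ) (hm0 : m 0 = 0) (hmr : m r = t)
    (hm_mono : ∀ j < r, m j < m (j + 1))
    (Tb : ℕ → Finset V)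
    (hTb : ∀ j, Tb j = (Finset.Icc (m (j - 1) + 1) (m j)).image fun a => v (u a))
    (T : Finset V) (hT : T = (Finset.Icc 1 t).image fun a => v (u a))
    (R : Finset V) (hR : R ⊆ S0)
    (hblocks : ∀ j, 1 ≤ j → j < r → 0 ≤ M (Tb j) (u (m j + 1) - 1))
    (hlast : 0 ≤ M (Tb r) k)
    (hR0 : 0 ≤ M R 0) :
    0 ≤ (∑ j ∈ Finset.Icc 1 (r - 1), M (Tb j) (u (m j + 1) - 1)) +
        M (Tb r) k + M R 0 ∧
    (∑ j ∈ Finset.Icc 1 (r - 1), M (Tb j) (u (m j + 1) - 1)) +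
        M (Tb r) k + M R 0 ≤ M (T ∪ R) k := by
  have Hsub : ∀ X Y : Finset V, H (X ∪ Y) + H (X ∩ Y) ≤ H X + H Y :=
    H_submod H G h hH
  -- monotonicity of u on [1, t]
  have hu_le : ∀ b, b ≤ t → ∀ a, 1 ≤ a → a ≤ b → u a ≤ u b := by
    intro b
    induction b with
    | zero => intro _ a ha hab; omega  -- contradiction: 1 ≤ a ≤ 0
    | succ n ih =>
      intro hbt a ha hab
      rcases Nat.lt_or_ge a (n + 1) with hlt | hge
      · have h1 : u a ≤ u n := ih (by omega) a ha (by omega)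
        have h2 : u n < u (n + 1) := hu_mono n (by omega) (by omega)
        omega
      · have heq : a = n + 1 := by omega
        subst heq; exact le_rfl
  -- monotonicity of m on [0, r]
  have hm_le : ∀ j, j ≤ r → ∀ i, i ≤ j → m i ≤ m j := by
    intro j
    induction j with
    | zero =>
      intro _ i hij
      have : i = 0 := by omega
      subst this; exact le_rfl
    | succ n ih =>
      intro hjr i hij
      rcases Nat.lt_or_ge i (n + 1) with hlt | hge
      · have h1 : m i ≤ m n := ih (by omega) i (by omega)
        have h2 : m n < m (n + 1) := hm_mono n (by omega)
        omega
      · have heq : i = n + 1 := by omega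
        subst heq; exact le_rfl
  have hSmono : ∀ i j, i ≤ j → Sset i ⊆ Sset j := by
    intro i j hij
    rw [hSset, hSset]
    exact Finset.union_subset_union (Finset.Subset.refl _)
      (Finset.image_subset_image (Finset.Icc_subset_Icc le_rfl hij))
  have hS0 : Sset 0 = S0 := by rw [hSset]; simp
  -- m j ∈ [1, t) facts
  have hmjt : ∀ j, 1 ≤ j → j < r → 1 ≤ m j ∧ m j < t := by
    intro j h1 h2
    constructor
    · have h01 : m 0 < m 1 := by simpa using hm_mono 0 (by omega)
      have h1j : m 1 ≤ m j := hm_le j (by omega) 1 (by omega)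
      omega
    · have h3 : m j < m (j + 1) := hm_mono j h2
      have h4 : m (j + 1) ≤ m r := hm_le r le_rfl (j + 1) (by omega)
      omega
  -- each block sits inside Sset k and inside T
  have hTbT : ∀ j, 1 ≤ j → j ≤ r → ∀ x ∈ Tb j, ∃ a, 1 ≤ a ∧ a ≤ t ∧ x = v (u a) := by
    intro j h1 h2 x hx
    rw [hTb] at hx
    rw [Finset.mem_image] at hx
    obtain ⟨a, ha, rfl⟩ := hx
    rw [Finset.mem_Icc] at ha
    have : m j ≤ t := by have := hm_le r le_rfl j h2; omega
    exact ⟨a, by omega, by omega, rfl⟩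
  have hTsubk : ∀ j, 1 ≤ j → j ≤ r → Tb j ⊆ Sset k := by
    intro j h1 h2 x hx
    obtain ⟨a, ha1, ha2, rfl⟩ := hTbT j h1 h2 x hx
    rw [hSset]
    apply Finset.mem_union_right
    exact Finset.mem_image_of_mem v (hu_range a (Finset.mem_Icc.mpr ⟨ha1, ha2⟩))
  -- block j lies inside Sset (u (m j + 1) - 1)
  have key2 : ∀ j, 1 ≤ j → j < r → Tb j ⊆ Sset (u (m j + 1) - 1) := by
    intro j h1 h2 x hx
    rw [hTb, Finset.mem_image] at hx
    obtain ⟨a, ha, rfl⟩ := hx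
    rw [Finset.mem_Icc] at ha
    obtain ⟨hmj1, hmjt'⟩ := hmjt j h1 h2
    have h3 : u a ≤ u (m j) := hu_le (m j) (by omega) a (by omega) ha.2
    have h4 : u (m j) < u (m j + 1) := hu_mono (m j) hmj1 hmjt'
    have h5 : 1 ≤ u a := by
      have := hu_range a (Finset.mem_Icc.mpr ⟨by omega, by omega⟩)
      rw [Finset.mem_Icc] at this; omega
    rw [hSset]
    apply Finset.mem_union_right
    exact Finset.mem_image_of_mem v (Finset.mem_Icc.mpr ⟨h5, by omega⟩)
  -- later blocks avoid Sset (u (m j + 1) - 1)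
  have key3 : ∀ j, 1 ≤ j → j < r → ∀ j', j < j' → j' ≤ r →
      ∀ x ∈ Tb j', x ∉ Sset (u (m j + 1) - 1) := by
    intro j h1 h2 j' hjj' hj'r x hx
    rw [hTb, Finset.mem_image] at hx
    obtain ⟨a, ha, rfl⟩ := hx
    rw [Finset.mem_Icc] at ha
    obtain ⟨hmj1, hmjt'⟩ := hmjt j h1 h2
    have hml : m j ≤ m (j' - 1) := hm_le (j' - 1) (by omega) j (by omega)
    have hat : a ≤ t := by have := hm_le r le_rfl j' hj'r; omega
    have h3 : u (m j + 1) ≤ u a := hu_le a hat (m j + 1) (by omega) (by omega)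
    have hua : u a ∈ Finset.Icc 1 k := hu_range a (Finset.mem_Icc.mpr ⟨by omega, hat⟩)
    have humj : u (m j + 1) ∈ Finset.Icc 1 k :=
      hu_range (m j + 1) (Finset.mem_Icc.mpr ⟨by omega, by omega⟩)
    rw [Finset.mem_Icc] at hua humj
    intro hmem
    rw [hSset, Finset.mem_union] at hmem
    rcases hmem with hmem | hmem
    · exact hv_S0 (u a) (Finset.mem_Icc.mpr hua) hmem
    · rw [Finset.mem_image] at hmem
      obtain ⟨b, hb, hvb⟩ := hmem
      rw [Finset.mem_Icc] at hb
      have hbk : b ∈ Finset.Icc 1 k := Finset.mem_Icc.mpr ⟨hb.1, by omega⟩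
      have := hv_inj (u a) (Finset.mem_Icc.mpr hua) b hbk hvb.symm
      omega
  -- T avoids S0
  have hTS0 : ∀ x ∈ T, x ∉ S0 := by
    intro x hx
    rw [hT, Finset.mem_image] at hx
    obtain ⟨a, ha, rfl⟩ := hx
    exact hv_S0 (u a) (hu_range a ha)
  -- union of blocks is T
  have cover : ∀ jj, jj ≤ r → ∀ a, 1 ≤ a → a ≤ m jj →
      ∃ j, 1 ≤ j ∧ j ≤ jj ∧ m (j - 1) < a ∧ a ≤ m j := by
    intro jj
    induction jj with
    | zero => intro _ a ha1 ha2; omega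
    | succ n ih =>
      intro hle a ha1 ha2
      rcases le_or_gt a (m n) with hc | hc
      · obtain ⟨j, hj⟩ := ih (by omega) a ha1 hc
        exact ⟨j, by omega, by omega, hj.2.2⟩
      · exact ⟨n + 1, by omega, le_rfl, by simpa using hc, ha2⟩
  have hUnion : (Finset.Icc 1 r).biUnion Tb = T := by
    apply Finset.Subset.antisymm
    · intro x hx
      rw [Finset.mem_biUnion] at hx
      obtain ⟨j, hj, hxj⟩ := hx
      rw [Finset.mem_Icc] at hj
      obtain ⟨a, ha1, ha2, rfl⟩ := hTbT j hj.1 hj.2 x hxj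
      rw [hT]
      exact Finset.mem_image_of_mem _ (Finset.mem_Icc.mpr ⟨ha1, ha2⟩)
    · intro x hx
      rw [hT, Finset.mem_image] at hx
      obtain ⟨a, ha, rfl⟩ := hx
      rw [Finset.mem_Icc] at ha
      obtain ⟨j, hj1, hj2, hj3, hj4⟩ := cover r le_rfl a ha.1 (by omega)
      rw [Finset.mem_biUnion]
      refine ⟨j, Finset.mem_Icc.mpr ⟨hj1, hj2⟩, ?_⟩
      rw [hTb]
      exact Finset.mem_image_of_mem _ (Finset.mem_Icc.mpr ⟨by omega, hj4⟩)
  -- telescoping main chain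
  have main : ∀ d : ℕ, d ≤ r - 1 →
      (∑ j ∈ Finset.Icc (r - d) (r - 1), M (Tb j) (u (m j + 1) - 1)) + M (Tb r) k
        ≤ H (Sset k \ (Finset.Icc (r - d) r).biUnion Tb) - H (Sset k) := by
    intro d
    induction d with
    | zero =>
      intro _
      rw [Nat.sub_zero, Finset.Icc_eq_empty (by omega : ¬ r ≤ r - 1),
        Finset.sum_empty, zero_add, Finset.Icc_self, Finset.singleton_biUnion,
        hM]
    | succ d ih =>
      intro hd
      have hj1 : 1 ≤ r - (d + 1) := by omega
      have hjr : r - (d + 1) < r := by omega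
      have hrd : r - d = r - (d + 1) + 1 := by omega
      have hicc : Finset.Icc (r - (d + 1)) r
          = insert (r - (d + 1)) (Finset.Icc (r - d) r) := by
        ext x; simp only [Finset.mem_Icc, Finset.mem_insert]; omega
      have hiccs : Finset.Icc (r - (d + 1)) (r - 1)
          = insert (r - (d + 1)) (Finset.Icc (r - d) (r - 1)) := by
        ext x; simp only [Finset.mem_Icc, Finset.mem_insert]; omega
      have hnot1 : (r - (d + 1)) ∉ Finset.Icc (r - d) (r - 1) := by
        simp only [Finset.mem_Icc]; omega
      rw [hiccs, Finset.sum_insert hnot1, hicc, Finset.biUnion_insert]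
      set j := r - (d + 1) with hjdef
      set U := (Finset.Icc (r - d) r).biUnion Tb with hUdef
      have hsd : Sset k \ (Tb j ∪ U) = (Sset k \ U) \ Tb j := by
        ext x
        simp only [Finset.mem_sdiff, Finset.mem_union]
        tauto
      have hZsub : Sset (u (m j + 1) - 1) ⊆ Sset k \ U := by
        intro x hx
        rw [Finset.mem_sdiff]
        have hik : u (m j + 1) - 1 ≤ k := by
          obtain ⟨hmj1, hmjt'⟩ := hmjt j hj1 hjr
          have := hu_range (m j + 1) (Finset.mem_Icc.mpr ⟨by omega, by omega⟩)
          rw [Finset.mem_Icc] at this; omega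
        refine ⟨hSmono _ k hik hx, ?_⟩
        rw [hUdef, Finset.mem_biUnion]
        rintro ⟨j', hj', hxj'⟩
        rw [Finset.mem_Icc] at hj'
        exact key3 j hj1 hjr j' (by omega) hj'.2 x hxj' hx
      have hmono := removal_mono Hsub hZsub (key2 j hj1 hjr)
      have ih' := ih (by omega)
      rw [hM, hsd]
      linarith
  have C := main (r - 1) le_rfl
  rw [show r - (r - 1) = 1 by omega] at C
  rw [hUnion] at C
  -- add R
  have hS0T : Sset 0 ⊆ Sset k \ T := by
    intro x hx
    rw [Finset.mem_sdiff]
    refine ⟨hSmono 0 k (by omega) hx, fun hxT => hTS0 x hxT ?_⟩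
    rw [hS0] at hx; exact hx
  have hRmono := removal_mono Hsub hS0T (show R ⊆ Sset 0 by rw [hS0]; exact hR)
  have hsd2 : Sset k \ (T ∪ R) = (Sset k \ T) \ R := by
    ext x
    simp only [Finset.mem_sdiff, Finset.mem_union]
    tauto
  constructor
  · apply add_nonneg (add_nonneg _ hlast) hR0
    apply Finset.sum_nonneg
    intro j hj
    rw [Finset.mem_Icc] at hj
    exact hblocks j hj.1 (by omega)
  · rw [hM (T ∪ R) k, hM R 0, hsd2]
    linarith
end
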